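/- arXiv:1711.06054 — 5 statements merged into one kernel-verified Lean document; each statement's English description precedes it below -/
import Mathlib

section
/- Let S be a dense subsemigroup of ((0,∞),+) and A₁, A₂ ⊆ S. If A₁ ∪ A₂ is a J-set near zero, then A₁ is a J-set near zero or A₂ is a J-set near zero. -/
open Filter Topology Set

noncomputable section

/-- The extension of `+` on a discrete semigroup to its Stone–Čech compactification
(space of ultrafilters): `A ∈ p + q` iff `{x : -x + A ∈ q} ∈ p`. -/
def uadd {α : Type} [Add α] (p q : Ultrafilter α) : Ultrafilter α :=
  p.bind fun a => q.map (a + ·)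

/-- `O⁺(S) = {p ∈ βS : for all ε > 0, S ∩ (0,ε) ∈ p}`. -/
def Oplus (S : AddSubsemigroup ℝ) : Set (Ultrafilter S) :=
  {p | ∀ ε : ℝ, 0 < ε → {x : S | (x : ℝ) < ε} ∈ p}

def IsLeftIdealIn {α : Type} [Add α] (T L : Set (Ultrafilter α)) : Prop :=
  L.Nonempty ∧ L ⊆ T ∧ ∀ p ∈ T, ∀ q ∈ L, uadd p q ∈ L

def IsMinimalLeftIdealIn {α : Type} [Add α] (T L : Set (Ultrafilter α)) : Prop :=
  IsLeftIdealIn T L ∧ ∀ L', IsLeftIdealIn T L' → L' ⊆ L → L' = L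

/-- The smallest ideal `K(O⁺(S))`, described as the union of all minimal left ideals. -/
def KOplus (S : AddSubsemigroup ℝ) : Set (Ultrafilter S) :=
  {p | ∃ L, IsMinimalLeftIdealIn (Oplus S) L ∧ p ∈ L}

/-- A dynamical system over an additive semigroup. -/
structure DynSys (σ : Type) [Add σ] where
  X : Type
  [ts : TopologicalSpace X]
  [cs : CompactSpace X]
  [t2 : T2Space X]
  T : σ → X → X
  cont : ∀ s, Continuous (T s)
  comp : ∀ s t, T s ∘ T t = T (s + t)

attribute [instance] DynSys.ts DynSys.cs DynSys.t2

/-- `T_p(x) = p-lim_{s ∈ S} T_s(x)`. -/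
def DynSys.Tp {σ : Type} [Add σ] (D : DynSys σ) (p : Ultrafilter σ) (x : D.X) : D.X :=
  (p.map fun s => D.T s x).lim

/-- `B` is syndetic near zero. -/
def syndeticNearZero (S : AddSubsemigroup ℝ) (A : Set S) : Prop :=
  ∀ ε : ℝ, 0 < ε → ∃ F : Finset S, F.Nonempty ∧ (∀ t ∈ F, (t : ℝ) < ε) ∧
    ∃ δ : ℝ, 0 < δ ∧ ∀ s : S, (s : ℝ) < δ → ∃ t ∈ F, t + s ∈ A

def uniformlyRecurrentNearZero (S : AddSubsemigroup ℝ) (D : DynSys S) (x : D.X) : Prop :=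
  ∀ W ∈ nhds x, syndeticNearZero S {s : S | D.T s x ∈ W}

/-- `x` and `y` are proximal near zero. -/
def proximalNearZero (S : AddSubsemigroup ℝ) (D : DynSys S) (x y : D.X) : Prop :=
  ∀ U ∈ nhdsSet (Set.diagonal D.X), ∀ ε : ℝ, 0 < ε →
    ∃ s : S, (s : ℝ) < ε ∧ (D.T s x, D.T s y) ∈ U

/-- `A` is piecewise syndetic near zero. -/
def piecewiseSyndeticNearZero (S : AddSubsemigroup ℝ) (A : Set S) : Prop :=
  ∃ (F : ℕ → Finset S) (δ : ℕ → ℝ),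
    (∀ n : ℕ, (F n).Nonempty ∧ (∀ t ∈ F n, (t : ℝ) < 1 / (n + 1)) ∧
      0 < δ n ∧ δ n < 1 / (n + 1)) ∧
    ∀ G : Finset S, ∀ μ : ℝ, 0 < μ → ∃ x : S, (x : ℝ) < μ ∧
      ∀ n : ℕ, ∀ g ∈ G, (g : ℝ) < δ n → ∃ t ∈ F n, t + (g + x) ∈ A

/-- `A` is a J-set near zero. -/
def JSetNearZero (S : AddSubsemigroup ℝ) (A : Set S) : Prop :=
  ∀ F : Finset (ℕ → S), F.Nonempty →
    (∀ f ∈ F, Tendsto (fun n => ((f n : S) : ℝ)) atTop (nhds 0)) →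
    ∀ δ : ℝ, 0 < δ → ∃ a : S, (a : ℝ) < δ ∧ ∃ H : Finset ℕ, H.Nonempty ∧
      ∀ f ∈ F, ∃ b ∈ A, (b : ℝ) = (a : ℝ) + ∑ t ∈ H, ((f t : S) : ℝ)

def J0 (S : AddSubsemigroup ℝ) : Set (Ultrafilter S) :=
  {p | p ∈ Oplus S ∧ ∀ A ∈ p, JSetNearZero S A}

/-- jointly intermittently uniformly recurrent near zero. -/
def JIUR0 (S : AddSubsemigroup ℝ) (D : DynSys S) (x y : D.X) : Prop :=
  ∀ U ∈ nhds y, piecewiseSyndeticNearZero S {s : S | D.T s x ∈ U ∧ D.T s y ∈ U}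

/-- jointly intermittently almost uniformly recurrent near zero. -/
def JIAUR0 (S : AddSubsemigroup ℝ) (D : DynSys S) (x y : D.X) : Prop :=
  ∀ U ∈ nhds y, JSetNearZero S {s : S | D.T s x ∈ U ∧ D.T s y ∈ U}
private lemma sumMemS (S : AddSubsemigroup ℝ) {ι : Type*} (s : Finset ι) (hs : s.Nonempty)
    (f : ι → ℝ) (h : ∀ i ∈ s, f i ∈ S) : (∑ i ∈ s, f i) ∈ S := by
  classical
  induction hs using Finset.Nonempty.cons_induction with
  | singleton a => simpa using h a (by simp)
  | cons a s ha hs ih =>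
      rw [Finset.sum_cons]
      exact AddMemClass.add_mem (h a (Finset.mem_cons_self a s))
        (ih fun i hi => h i (Finset.mem_cons_of_mem hi))

private lemma sumHalfPow (T : Finset ℕ) : ∑ n ∈ T, (1 / 2 : ℝ) ^ n ≤ 2 := by
  have hsub : T ⊆ Finset.range (T.sup id + 1) := by
    intro n hn
    exact Finset.mem_range.mpr (Nat.lt_succ_of_le (Finset.le_sup (f := id) hn))
  calc ∑ n ∈ T, (1 / 2 : ℝ) ^ n ≤ ∑ n ∈ Finset.range (T.sup id + 1), (1 / 2 : ℝ) ^ n :=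
        Finset.sum_le_sum_of_subset_of_nonneg hsub (fun i _ _ => by positivity)
    _ ≤ 2 := sum_geometric_two_le _

theorem stmt10 (S : AddSubsemigroup ℝ)
    (hpos : ∀ x : ℝ, x ∈ S → 0 < x)
    (hdense : Set.Ioi (0 : ℝ) ⊆ closure (S : Set ℝ))
    (A₁ A₂ : Set S) (h : JSetNearZero S (A₁ ∪ A₂)) :
    JSetNearZero S A₁ ∨ JSetNearZero S A₂ := by
  classical
  rw [or_iff_not_imp_left]
  intro hA1
  rw [JSetNearZero] at hA1
  push_neg at hA1
  obtain ⟨F₁, hF₁ne, hF₁tend, δ₁, hδ₁, hfail⟩ := hA1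
  intro F₀ hF₀ne htend₀ δ hδ
  set F : Finset (ℕ → S) := F₀ ∪ F₁ with hFdef
  have hF₀sub : F₀ ⊆ F := Finset.subset_union_left
  have hF₁sub : F₁ ⊆ F := Finset.subset_union_right
  have htend : ∀ f ∈ F, Tendsto (fun n => ((f n : S) : ℝ)) atTop (nhds 0) := by
    intro f hf
    rcases Finset.mem_union.mp hf with hf | hf
    · exact htend₀ f hf
    · exact hF₁tend f hf
  set δ' : ℝ := min δ δ₁ with hδ'def
  have hδ' : 0 < δ' := lt_min hδ hδ₁
  -- choose uniformly small indices
  have hMex : ∀ n : ℕ, ∃ N, ∀ k ≥ N, ∀ f ∈ F, ((f k : S) : ℝ) < δ' / 8 * (1 / 2) ^ n := by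
    intro n
    have hb : (0 : ℝ) < δ' / 8 * (1 / 2) ^ n := by positivity
    have hev : ∀ᶠ k in atTop, ∀ f ∈ F, ((f k : S) : ℝ) < δ' / 8 * (1 / 2) ^ n := by
      rw [eventually_all_finset]
      intro f hf
      exact (htend f hf).eventually (Filter.Tendsto.eventually_lt_const hb tendsto_id)
    exact eventually_atTop.mp hev
  choose M hMspec using hMex
  set K : ℕ → ℕ := fun n => n + (Finset.range (n + 1)).sup M with hKdef
  have hKmono : StrictMono K := by
    apply strictMono_nat_of_lt_succ
    intro n
    have : (Finset.range (n + 1)).sup M ≤ (Finset.range (n + 1 + 1)).sup M :=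
      Finset.sup_mono (Finset.range_subset_range.mpr (by omega))
    simp only [hKdef]; omega
  have hKs : ∀ n, ∀ f ∈ F, ((f (K n) : S) : ℝ) < δ' / 8 * (1 / 2) ^ n := by
    intro n f hf
    exact hMspec n (K n)
      (le_trans (Finset.le_sup (Finset.self_mem_range_succ n)) (by simp [hKdef])) f hf
  -- Hales-Jewett
  haveI : Fintype {x // x ∈ F} := FinsetCoe.fintype F
  obtain ⟨f₀, hf₀⟩ := hF₀ne
  haveI : Nonempty {x // x ∈ F} := ⟨⟨f₀, hF₀sub hf₀⟩⟩
  obtain ⟨ι, hι, hHJ⟩ :=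
    Combinatorics.Line.exists_mono_in_high_dimension {x // x ∈ F} Bool
  letI := hι
  rcases isEmpty_or_nonempty ι with hE | hNE
  · obtain ⟨l, -, -⟩ := hHJ fun _ => true
    obtain ⟨i, -⟩ := l.proper
    exact (hE.false i).elim
  set d : ℕ := Fintype.card ι with hddef
  have hd : 0 < d := Fintype.card_pos
  set e : ι ≃ Fin d := Fintype.equivFin ι with hedef
  set n2 : ℕ → ι → ℕ := fun t i => d * t + (e i).1 with hn2def
  have hn2inj : ∀ {t t' : ℕ} {i i' : ι}, n2 t i = n2 t' i' → t = t' ∧ i = i' := by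
    intro t t' i i' hEq
    have h1 : (d * t + ((e i) : Fin d).1) / d = t := by
      rw [Nat.mul_add_div hd, Nat.div_eq_of_lt (e i).2, Nat.add_zero]
    have h2 : (d * t' + ((e i') : Fin d).1) / d = t' := by
      rw [Nat.mul_add_div hd, Nat.div_eq_of_lt (e i').2, Nat.add_zero]
    have h3 : (d * t + ((e i) : Fin d).1) % d = (e i).1 := by
      rw [Nat.mul_add_mod, Nat.mod_eq_of_lt (e i).2]
    have h4 : (d * t' + ((e i') : Fin d).1) % d = (e i').1 := by
      rw [Nat.mul_add_mod, Nat.mod_eq_of_lt (e i').2]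
    simp only [hn2def] at hEq
    constructor
    · rw [← h1, ← h2, hEq]
    · apply e.injective
      apply Fin.ext
      rw [← h3, ← h4, hEq]
  set k : ℕ → ι → ℕ := fun t i => K (n2 t i) with hkdef
  have hkinj : ∀ {t t' : ℕ} {i i' : ι}, k t i = k t' i' → t = t' ∧ i = i' := by
    intro t t' i i' hEq
    exact hn2inj (hKmono.injective hEq)
  -- the auxiliary sequences
  set gval : (ι → {x // x ∈ F}) → ℕ → ℝ :=
    fun w t => ∑ i : ι, (((w i).1 (k t i) : S) : ℝ) with hgvaldef
  have hgmem : ∀ w t, gval w t ∈ S := by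
    intro w t
    exact sumMemS S Finset.univ Finset.univ_nonempty _
      (fun i _ => ((w i).1 (k t i)).2)
  set g : (ι → {x // x ∈ F}) → ℕ → S := fun w t => ⟨gval w t, hgmem w t⟩ with hgdef
  have hterm : ∀ (w : ι → {x // x ∈ F}) t (i : ι),
      (((w i).1 (k t i) : S) : ℝ) ≤ δ' / 8 * (1 / 2) ^ t := by
    intro w t i
    have h1 := hKs (n2 t i) (w i).1 (w i).2
    have h2 : (1 / 2 : ℝ) ^ (n2 t i) ≤ (1 / 2) ^ t := by
      apply pow_le_pow_of_le_one (by norm_num) (by norm_num)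
      have : t ≤ d * t := Nat.le_mul_of_pos_left t hd
      simp only [hn2def]; omega
    have h3 : δ' / 8 * (1 / 2 : ℝ) ^ (n2 t i) ≤ δ' / 8 * (1 / 2) ^ t := by
      apply mul_le_mul_of_nonneg_left h2 (by positivity)
    exact le_trans h1.le h3
  have htendg : ∀ w, Tendsto (fun t => ((g w t : S) : ℝ)) atTop (nhds 0) := by
    intro w
    apply squeeze_zero (fun t => (hpos _ (hgmem w t)).le)
      (g := fun t => (d * (δ' / 8)) * (1 / 2) ^ t)
    · intro t
      show gval w t ≤ _
      calc gval w t ≤ ∑ _i : ι, δ' / 8 * (1 / 2 : ℝ) ^ t :=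
            Finset.sum_le_sum (fun i _ => hterm w t i)
        _ = (d * (δ' / 8)) * (1 / 2) ^ t := by
            rw [Finset.sum_const, Finset.card_univ, nsmul_eq_mul]
            ring
    · have := tendsto_pow_atTop_nhds_zero_of_lt_one (by norm_num : (0:ℝ) ≤ 1/2)
        (by norm_num : (1/2 : ℝ) < 1)
      simpa using this.const_mul (d * (δ' / 8))
  -- apply the J-property of the union
  obtain ⟨a, haδ, H, hHne, hspec⟩ :=
    h (Finset.image g Finset.univ) (Finset.Nonempty.image Finset.univ_nonempty g)
      (by
        intro f' hf'
        obtain ⟨w, -, rfl⟩ := Finset.mem_image.mp hf'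
        exact htendg w)
      (δ' / 2) (by positivity)
  have hw : ∀ w, ∃ b ∈ A₁ ∪ A₂,
      (b : ℝ) = (a : ℝ) + ∑ t ∈ H, ((g w t : S) : ℝ) :=
    fun w => hspec (g w) (Finset.mem_image_of_mem g (Finset.mem_univ w))
  -- coloring
  set C : (ι → {x // x ∈ F}) → Bool := fun w =>
    decide (∃ b ∈ A₁, (b : ℝ) = (a : ℝ) + ∑ t ∈ H, ((g w t : S) : ℝ)) with hCdef
  obtain ⟨l, c, hl⟩ := hHJ C
  set V : Finset ι := Finset.univ.filter (fun i => l.idxFun i = none) with hVdef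
  have hVne : V.Nonempty := by
    obtain ⟨i, hi⟩ := l.proper
    exact ⟨i, by simp [hVdef, hi]⟩
  set x₀ : {x // x ∈ F} := Classical.arbitrary _ with hx₀def
  set cval : ℝ := ∑ t ∈ H, ∑ i ∈ Vᶜ, (((l x₀ i).1 (k t i) : S) : ℝ) with hcvaldef
  -- splitting
  have hsplit : ∀ (x : {x // x ∈ F}) (t : ℕ),
      ((g (l x) t : S) : ℝ) =
        (∑ i ∈ V, ((x.1 (k t i) : S) : ℝ)) + ∑ i ∈ Vᶜ, (((l x₀ i).1 (k t i) : S) : ℝ) := by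
    intro x t
    show (∑ i : ι, ((((l x) i).1 (k t i) : S) : ℝ)) = _
    rw [← Finset.sum_add_sum_compl V (fun i => ((((l x) i).1 (k t i) : S) : ℝ))]
    congr 1
    · apply Finset.sum_congr rfl
      intro i hi
      have hnone : l.idxFun i = none := by simpa [hVdef] using hi
      simp [Combinatorics.Line.coe_apply, hnone]
    · apply Finset.sum_congr rfl
      intro i hi
      have hsome : ¬ l.idxFun i = none := by
        simpa [hVdef] using hi
      obtain ⟨y, hy⟩ := Option.ne_none_iff_exists'.mp hsome
      simp [Combinatorics.Line.coe_apply, hy]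
  set H' : Finset ℕ := (H ×ˢ V).image (fun p => k p.1 p.2) with hH'def
  have hH'ne : H'.Nonempty := Finset.Nonempty.image (hHne.product hVne) _
  have hsumH' : ∀ x : {x // x ∈ F},
      ∑ t' ∈ H', ((x.1 t' : S) : ℝ) = ∑ t ∈ H, ∑ i ∈ V, ((x.1 (k t i) : S) : ℝ) := by
    intro x
    rw [hH'def, Finset.sum_image, Finset.sum_product]
    intro p hp q hq hpq
    obtain ⟨h1, h2⟩ := hkinj hpq
    exact Prod.ext h1 h2
  have key : ∀ x : {x // x ∈ F},
      (a : ℝ) + ∑ t ∈ H, ((g (l x) t : S) : ℝ) =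
        ((a : ℝ) + cval) + ∑ t' ∈ H', ((x.1 t' : S) : ℝ) := by
    intro x
    rw [hsumH']
    calc (a : ℝ) + ∑ t ∈ H, ((g (l x) t : S) : ℝ)
        = (a : ℝ) + ∑ t ∈ H, ((∑ i ∈ V, ((x.1 (k t i) : S) : ℝ))
            + ∑ i ∈ Vᶜ, (((l x₀ i).1 (k t i) : S) : ℝ)) := by
          congr 1
          exact Finset.sum_congr rfl fun t _ => hsplit x t
      _ = ((a : ℝ) + cval) + ∑ t ∈ H, ∑ i ∈ V, ((x.1 (k t i) : S) : ℝ) := by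
          rw [Finset.sum_add_distrib, hcvaldef]; ring
  -- membership and bounds for a + cval
  have hcmem : cval = 0 ∨ cval ∈ S := by
    by_cases hVc : (Vᶜ : Finset ι).Nonempty
    · right
      apply sumMemS S H hHne
      intro t _
      exact sumMemS S Vᶜ hVc _ (fun i _ => ((l x₀ i).1 (k t i)).2)
    · left
      rw [Finset.not_nonempty_iff_eq_empty] at hVc
      simp [hcvaldef, hVc]
  have haS' : (a : ℝ) + cval ∈ S := by
    rcases hcmem with hc | hc
    · rw [hc, add_zero]; exact a.2
    · exact AddMemClass.add_mem a.2 hc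
  have hcb : cval ≤ δ' / 4 := by
    rw [hcvaldef, ← Finset.sum_product']
    calc ∑ p ∈ H ×ˢ Vᶜ, (((l x₀ p.2).1 (k p.1 p.2) : S) : ℝ)
        ≤ ∑ p ∈ H ×ˢ Vᶜ, δ' / 8 * (1 / 2 : ℝ) ^ (n2 p.1 p.2) := by
          apply Finset.sum_le_sum
          intro p _
          exact (hKs (n2 p.1 p.2) ((l x₀ p.2).1 : ℕ → S) ((l x₀ p.2)).2).le
      _ = ∑ n ∈ (H ×ˢ Vᶜ).image (fun p => n2 p.1 p.2), δ' / 8 * (1 / 2 : ℝ) ^ n := by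
          rw [Finset.sum_image]
          intro p hp q hq hpq
          obtain ⟨h1, h2⟩ := hn2inj hpq
          exact Prod.ext h1 h2
      _ = δ' / 8 * ∑ n ∈ (H ×ˢ Vᶜ).image (fun p => n2 p.1 p.2), (1 / 2 : ℝ) ^ n := by
          rw [Finset.mul_sum]
      _ ≤ δ' / 8 * 2 := by
          apply mul_le_mul_of_nonneg_left (sumHalfPow _) (by positivity)
      _ = δ' / 4 := by ring
  set aS' : S := ⟨(a : ℝ) + cval, haS'⟩ with haS'def
  have ha' : (aS' : ℝ) < δ' := by
    show (a : ℝ) + cval < δ'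
    have : (0:ℝ) < δ' := hδ'
    linarith [haδ]
  -- case on the color
  cases c with
  | true =>
      exfalso
      obtain ⟨f, hfF₁, hbad⟩ :=
        hfail aS' (lt_of_lt_of_le ha' (min_le_right δ δ₁)) H' hH'ne
      set x : {x // x ∈ F} := ⟨f, hF₁sub hfF₁⟩ with hxdef
      have hx : ∃ b ∈ A₁, (b : ℝ) = (a : ℝ) + ∑ t ∈ H, ((g (l x) t : S) : ℝ) := by
        have := hl x
        simpa [hCdef] using this
      obtain ⟨b, hbA₁, hbval⟩ := hx
      exact hbad b hbA₁ (by rw [hbval, key x])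
  | false =>
      refine ⟨aS', lt_of_lt_of_le ha' (min_le_left δ δ₁), H', hH'ne, ?_⟩
      intro f hf
      set x : {x // x ∈ F} := ⟨f, hF₀sub hf⟩ with hxdef
      obtain ⟨b, hbU, hbval⟩ := hw (l x)
      have hnot : ¬ ∃ b ∈ A₁, (b : ℝ) = (a : ℝ) + ∑ t ∈ H, ((g (l x) t : S) : ℝ) := by
        have := hl x
        simpa [hCdef] using this
      have hbA₂ : b ∈ A₂ := by
        rcases hbU with hb | hb
        · exact absurd ⟨b, hb, hbval⟩ hnot
        · exact hb
      exact ⟨b, hbA₂, by rw [hbval, key x]⟩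
end
end

section
/- Let S be a dense subsemigroup of ((0,∞),+) and let K = {A ⊆ S : S∖A is not a J-set near zero}. Then K is a filter on S, the set of ultrafilters containing K equals J₀(S) = {p ∈ O⁺(S) : every A ∈ p is a J-set near zero}, and J₀(S) is a compact subsemigroup of βS. -/
open Filter Topology Set

noncomputable section

/-- The filter of sets whose complement is not a J-set near zero. -/
def KJ (S : AddSubsemigroup ℝ) : Set (Set S) :=
  {A | ¬ JSetNearZero S Aᶜ}

namespace StmtAux

lemma sum_mem_S {β : Type*} (S : AddSubsemigroup ℝ) {H : Finset β} (hne : H.Nonempty)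
    {g : β → ℝ} (hg : ∀ i ∈ H, g i ∈ S) : ∑ i ∈ H, g i ∈ S := by
  classical
  induction H using Finset.induction_on with
  | empty => exact absurd hne (by simp)
  | @insert a s ha ih =>
    rw [Finset.sum_insert ha]
    rcases s.eq_empty_or_nonempty with rfl | hs
    · simpa using hg _ (by simp)
    · exact S.add_mem (hg _ (by simp)) (ih hs fun i hi => hg _ (by simp [hi]))

lemma exists_small (S : AddSubsemigroup ℝ)
    (hdense : Set.Ioi (0 : ℝ) ⊆ closure (S : Set ℝ)) {ε : ℝ} (hε : 0 < ε) :
    ∃ s : S, (s : ℝ) < ε := by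
  have h2 : (ε/2 : ℝ) ∈ closure (S : Set ℝ) := hdense (by simpa using half_pos hε)
  rcases mem_closure_iff.1 h2 (Ioo 0 ε) isOpen_Ioo ⟨half_pos hε, half_lt_self hε⟩ with
    ⟨y, hy1, hy2⟩
  exact ⟨⟨y, hy2⟩, hy1.2⟩

lemma exists_seq_lt (S : AddSubsemigroup ℝ)
    (hdense : Set.Ioi (0 : ℝ) ⊆ closure (S : Set ℝ)) (c : ℕ → ℝ) (hc : ∀ n, 0 < c n) :
    ∃ f : ℕ → S, ∀ n, ((f n : S) : ℝ) < c n := by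
  choose f hf using fun n => exists_small S hdense (hc n)
  exact ⟨f, hf⟩

lemma tendsto_of_lt (S : AddSubsemigroup ℝ) (hpos : ∀ x : ℝ, x ∈ S → 0 < x)
    {f : ℕ → S} {c : ℕ → ℝ} (hf : ∀ n, ((f n : S) : ℝ) < c n)
    (hc : Tendsto c atTop (nhds 0)) : Tendsto (fun n => ((f n : S) : ℝ)) atTop (nhds 0) :=
  squeeze_zero (fun n => (hpos _ (f n).2).le) (fun n => (hf n).le) hc

lemma geom_sum_le_one (K : Finset ℕ) : ∑ s ∈ K, ((1:ℝ)/2) ^ (s+1) ≤ 1 := by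
  classical
  rcases K.eq_empty_or_nonempty with rfl | hK
  · simp
  obtain ⟨m, hm⟩ := K.max_of_nonempty hK
  have hsub : K ⊆ Finset.range (m+1) := fun x hx =>
    Finset.mem_range.2 (Nat.lt_succ_of_le (K.le_max_of_eq hx hm))
  calc ∑ s ∈ K, ((1:ℝ)/2) ^ (s+1) ≤ ∑ s ∈ Finset.range (m+1), ((1:ℝ)/2) ^ (s+1) :=
        Finset.sum_le_sum_of_subset_of_nonneg hsub (fun i _ _ => by positivity)
    _ = (1/2) * ∑ s ∈ Finset.range (m+1), ((1:ℝ)/2) ^ s := by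
        rw [Finset.mul_sum]; exact Finset.sum_congr rfl fun i _ => by ring
    _ ≤ (1/2) * 2 := by
        have := sum_geometric_two_le (m+1)
        nlinarith [this]
    _ = 1 := by norm_num

lemma J_mono (S : AddSubsemigroup ℝ) {A B : Set S} (hA : JSetNearZero S A) (hAB : A ⊆ B) :
    JSetNearZero S B := by
  intro F hFne hFnull δ hδ
  obtain ⟨a, ha, H, hHne, hb⟩ := hA F hFne hFnull δ hδ
  exact ⟨a, ha, H, hHne, fun f hf => by
    obtain ⟨b, hbA, hbval⟩ := hb f hf
    exact ⟨b, hAB hbA, hbval⟩⟩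

lemma mem_uadd {α : Type} [Add α] {A : Set α} {p q : Ultrafilter α} :
    A ∈ uadd p q ↔ {a | {x | a + x ∈ A} ∈ q} ∈ p := by
  change A ∈ Filter.bind (↑p) (fun a => ↑(q.map (a + ·))) ↔ _
  rw [Filter.mem_bind']
  rfl

end StmtAux

open StmtAux in
/-- Partition regularity (the key combinatorial lemma), proved via Hales–Jewett. -/
lemma J_union (S : AddSubsemigroup ℝ) (hpos : ∀ x : ℝ, x ∈ S → 0 < x)
    {C D : Set S} (hCD : JSetNearZero S (C ∪ D)) (hC : ¬ JSetNearZero S C) :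
    JSetNearZero S D := by
  classical
  rw [JSetNearZero] at hC
  push_neg at hC
  obtain ⟨F₀, hF₀ne, hF₀null, δ₀, hδ₀, hstar⟩ := hC
  intro F hFne hFnull δ hδ
  -- Hales–Jewett setup
  obtain ⟨ι, hιfin, hHJ⟩ :=
    Combinatorics.Line.exists_mono_in_high_dimension {g // g ∈ F₀} ({f // f ∈ F} → Bool)
  letI := hιfin
  haveI hF₀neT : Nonempty {g // g ∈ F₀} := ⟨⟨hF₀ne.choose, hF₀ne.choose_spec⟩⟩
  haveI hFneT : Nonempty {f // f ∈ F} := ⟨⟨hFne.choose, hFne.choose_spec⟩⟩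
  haveI hιne : Nonempty ι := by
    obtain ⟨l, -⟩ := hHJ fun _ _ => true
    obtain ⟨i, -⟩ := l.proper
    exact ⟨i⟩
  set n : ℕ := Fintype.card ι with hn
  set e : ι → ℕ := fun i => ((Fintype.equivFin ι) i : ℕ) with he
  have heinj : Function.Injective e := fun i j h =>
    (Fintype.equivFin ι).injective (Fin.val_injective h)
  set fam : Finset (ℕ → S) := F ∪ F₀ with hfam
  have hfamnull : ∀ u ∈ fam, Tendsto (fun k => ((u k : S) : ℝ)) atTop (nhds 0) := by
    intro u hu
    rcases Finset.mem_union.1 hu with h | h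
    · exact hFnull u h
    · exact hF₀null u h
  set m : ℝ := min δ δ₀ with hm
  have hmpos : 0 < m := lt_min hδ hδ₀
  set η : ℝ := m / (2 * ((n : ℝ) + 2)) with hη
  have hηpos : 0 < η := by positivity
  have hηe : η * (2 * ((n : ℝ) + 2)) = m := by
    rw [hη]; field_simp
  have hη2 : ((n : ℝ) + 1) * η < m / 2 := by nlinarith [hηpos, hmpos]
  -- thresholds and the compression map θ
  have hth : ∀ s : ℕ, ∃ N : ℕ, ∀ u ∈ fam, ∀ k, N ≤ k → ((u k : S) : ℝ) < η * (1/2)^(s+1) := by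
    intro s
    have hev : ∀ᶠ k in atTop, ∀ u ∈ fam, ((u k : S) : ℝ) < η * (1/2)^(s+1) :=
      (Filter.eventually_all_finset fam).2 fun u hu =>
        (hfamnull u hu).eventually_lt_const (by positivity)
    obtain ⟨N, hN⟩ := Filter.eventually_atTop.1 hev
    exact ⟨N, fun u hu k hk => hN k hk u hu⟩
  choose Nf hNf using hth
  set θ : ℕ → ℕ := fun t => t + (Finset.range (t+1)).sup Nf with hθdef
  have hθmono : StrictMono θ := by
    intro t t' h
    have hsup : (Finset.range (t+1)).sup Nf ≤ (Finset.range (t'+1)).sup Nf :=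
      Finset.sup_mono (Finset.range_subset_range.2 (by omega))
    simp only [hθdef]
    omega
  have hθ : ∀ s, ∀ u ∈ fam, ((u (θ s) : S) : ℝ) < η * (1/2)^(s+1) := by
    intro s u hu
    refine hNf s u hu _ ?_
    have : Nf s ≤ (Finset.range (s+1)).sup Nf := Finset.le_sup (by simp)
    simp only [hθdef]
    omega
  have hkey : ∀ ρ : ℕ → ℕ, Function.Injective ρ → ∀ u ∈ fam, ∀ K : Finset ℕ,
      ∑ t ∈ K, ((u (θ (ρ t)) : S) : ℝ) ≤ η := by
    intro ρ hρ u hu K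
    have h1 : ∑ t ∈ K, ((u (θ (ρ t)) : S) : ℝ) ≤ ∑ t ∈ K, η * ((1:ℝ)/2)^(ρ t + 1) :=
      Finset.sum_le_sum fun t _ => (hθ (ρ t) u hu).le
    have h2 : ∑ t ∈ K, η * ((1:ℝ)/2)^(ρ t + 1) = η * ∑ s ∈ K.image ρ, ((1:ℝ)/2)^(s+1) := by
      rw [Finset.sum_image (fun a _ b _ h => hρ h), Finset.mul_sum]
    have h3 := geom_sum_le_one (K.image ρ)
    nlinarith
  set τ : ι → ℕ → ℕ := fun i t => θ (Nat.pair (e i) t) with hτ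
  have hτinj : ∀ {i i' t t'}, τ i t = τ i' t' → i = i' ∧ t = t' := by
    intro i i' t t' h
    have h2 := hθmono.injective h
    rw [Nat.pair_eq_pair] at h2
    exact ⟨heinj h2.1, h2.2⟩
  -- hybrid sequences
  have hhybmem : ∀ (w : ι → {g // g ∈ F₀}) (f : {f // f ∈ F}) (t : ℕ),
      ((((f : ℕ → S)) (θ t) : ℝ) + ∑ i : ι, (((w i : ℕ → S)) (τ i t) : ℝ)) ∈ S := by
    intro w f t
    refine S.add_mem ((f : ℕ → S) (θ t)).2 ?_
    exact sum_mem_S S Finset.univ_nonempty fun i _ => ((w i : ℕ → S) (τ i t)).2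
  set hyb : (ι → {g // g ∈ F₀}) → {f // f ∈ F} → ℕ → S :=
    fun w f t => ⟨_, hhybmem w f t⟩ with hhyb
  have hhybcoe : ∀ w f t, ((hyb w f t : S) : ℝ) =
      (((f : ℕ → S)) (θ t) : ℝ) + ∑ i : ι, (((w i : ℕ → S)) (τ i t) : ℝ) := fun _ _ _ => rfl
  have hmemF : ∀ f : {f // f ∈ F}, (f : ℕ → S) ∈ fam := fun f => Finset.mem_union_left _ f.2
  have hmemF₀ : ∀ g : {g // g ∈ F₀}, (g : ℕ → S) ∈ fam := fun g => Finset.mem_union_right _ g.2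
  have hhybnull : ∀ w f, Tendsto (fun t => ((hyb w f t : S) : ℝ)) atTop (nhds 0) := by
    intro w f
    have hb : ∀ t, ((hyb w f t : S) : ℝ) ≤ ((n : ℝ) + 1) * (η * (1/2)^(t+1)) := by
      intro t
      rw [hhybcoe]
      have h1 : (((f : ℕ → S)) (θ t) : ℝ) ≤ η * (1/2)^(t+1) := (hθ t _ (hmemF f)).le
      have h2 : ∀ i : ι, (((w i : ℕ → S)) (τ i t) : ℝ) ≤ η * (1/2)^(t+1) := by
        intro i
        have h3 : (((w i : ℕ → S)) (τ i t) : ℝ) < η * ((1:ℝ)/2)^(Nat.pair (e i) t + 1) :=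
          hθ _ _ (hmemF₀ (w i))
        have h4 : ((1:ℝ)/2)^(Nat.pair (e i) t + 1) ≤ ((1:ℝ)/2)^(t+1) := by
          apply pow_le_pow_of_le_one (by norm_num) (by norm_num)
          have := Nat.right_le_pair (e i) t
          omega
        nlinarith
      have h5 : ∑ i : ι, (((w i : ℕ → S)) (τ i t) : ℝ) ≤ (n : ℝ) * (η * (1/2)^(t+1)) := by
        calc ∑ i : ι, (((w i : ℕ → S)) (τ i t) : ℝ) ≤ ∑ _i : ι, η * (1/2)^(t+1) :=
              Finset.sum_le_sum fun i _ => h2 i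
          _ = (n : ℝ) * (η * (1/2)^(t+1)) := by
              rw [Finset.sum_const, Finset.card_univ, nsmul_eq_mul, hn]
      linarith
    have hb0 : ∀ t, 0 ≤ ((hyb w f t : S) : ℝ) := fun t => (hpos _ (hyb w f t).2).le
    have hg : Tendsto (fun t : ℕ => ((n : ℝ) + 1) * (η * (1/2)^(t+1))) atTop (nhds 0) := by
      have h := (tendsto_pow_atTop_nhds_zero_of_lt_one (r := (1:ℝ)/2) (by norm_num)
        (by norm_num)).const_mul (((n : ℝ) + 1) * η * (1/2))
      rw [mul_zero] at h
      refine h.congr fun t => ?_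
      rw [pow_succ]; ring
    exact squeeze_zero hb0 hb hg
  -- apply J-ness of C ∪ D to the hybrid family
  set G : Finset (ℕ → S) :=
    (Finset.univ : Finset ((ι → {g // g ∈ F₀}) × {f // f ∈ F})).image
      (fun p => hyb p.1 p.2) with hG
  have hGne : G.Nonempty := Finset.Nonempty.image Finset.univ_nonempty _
  have hGnull : ∀ u ∈ G, Tendsto (fun k => ((u k : S) : ℝ)) atTop (nhds 0) := by
    intro u hu
    obtain ⟨q, -, rfl⟩ := Finset.mem_image.1 hu
    exact hhybnull q.1 q.2
  obtain ⟨a, haδ', H, hHne, hmem⟩ := hCD G hGne hGnull (m/2) (by positivity)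
  have hmem' : ∀ w f, ∃ b ∈ C ∪ D, (b : ℝ) = (a : ℝ) + ∑ t ∈ H, ((hyb w f t : S) : ℝ) :=
    fun w f => hmem (hyb w f) (Finset.mem_image.2 ⟨(w, f), Finset.mem_univ _, rfl⟩)
  have hsum_exp : ∀ w f, ∑ t ∈ H, ((hyb w f t : S) : ℝ) =
      (∑ t ∈ H, (((f : ℕ → S)) (θ t) : ℝ)) +
        ∑ i : ι, ∑ t ∈ H, (((w i : ℕ → S)) (τ i t) : ℝ) := by
    intro w f
    calc ∑ t ∈ H, ((hyb w f t : S) : ℝ)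
        = ∑ t ∈ H, ((((f : ℕ → S)) (θ t) : ℝ) + ∑ i : ι, (((w i : ℕ → S)) (τ i t) : ℝ)) :=
          Finset.sum_congr rfl fun t _ => hhybcoe w f t
      _ = (∑ t ∈ H, (((f : ℕ → S)) (θ t) : ℝ)) +
            ∑ t ∈ H, ∑ i : ι, (((w i : ℕ → S)) (τ i t) : ℝ) := Finset.sum_add_distrib
      _ = _ := by rw [Finset.sum_comm]
  -- coloring and monochromatic line
  set col : (ι → {g // g ∈ F₀}) → ({f // f ∈ F} → Bool) := fun w f =>
    decide (∃ b ∈ D, (b : ℝ) = (a : ℝ) + ∑ t ∈ H, ((hyb w f t : S) : ℝ)) with hcol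
  obtain ⟨l, c₀, hl⟩ := hHJ col
  set x₀ : {g // g ∈ F₀} := Classical.arbitrary _ with hx₀
  set letter : ι → {g // g ∈ F₀} := fun i => (l.idxFun i).getD x₀ with hletter
  have hlx1 : ∀ (x : {g // g ∈ F₀}) i, l.idxFun i = none → l x i = x := by
    intro x i h
    rw [Combinatorics.Line.coe_apply, h]
    rfl
  have hlx2 : ∀ (x : {g // g ∈ F₀}) i, ¬ l.idxFun i = none → l x i = letter i := by
    intro x i h
    rw [Combinatorics.Line.coe_apply]
    cases hc : l.idxFun i with
    | none => exact absurd hc h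
    | some u => simp [hletter, hc]
  set Wf : Finset ι := Finset.univ.filter (fun i => l.idxFun i = none) with hWf
  set Wc : Finset ι := Finset.univ.filter (fun i => ¬ l.idxFun i = none) with hWc
  have hWfne : Wf.Nonempty := by
    obtain ⟨i0, hi0⟩ := l.proper
    exact ⟨i0, Finset.mem_filter.2 ⟨Finset.mem_univ _, hi0⟩⟩
  set R : ℝ := ∑ i ∈ Wc, ∑ t ∈ H, (((letter i : ℕ → S)) (τ i t) : ℝ) with hR
  have hsplit : ∀ x : {g // g ∈ F₀}, ∑ i : ι, ∑ t ∈ H, (((l x i : ℕ → S)) (τ i t) : ℝ) =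
      (∑ i ∈ Wf, ∑ t ∈ H, (((x : ℕ → S)) (τ i t) : ℝ)) + R := by
    intro x
    rw [← Finset.sum_filter_add_sum_filter_not Finset.univ (fun i => l.idxFun i = none)
      (fun i => ∑ t ∈ H, (((l x i : ℕ → S)) (τ i t) : ℝ))]
    congr 1
    · refine Finset.sum_congr rfl fun i hi => Finset.sum_congr rfl fun t _ => ?_
      rw [hlx1 x i (Finset.mem_filter.1 hi).2]
    · refine Finset.sum_congr rfl fun i hi => Finset.sum_congr rfl fun t _ => ?_
      rw [hlx2 x i (Finset.mem_filter.1 hi).2]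
  set HW : Finset ℕ := Wf.biUnion (fun i => H.image (τ i)) with hHW
  have hHWne : HW.Nonempty :=
    Finset.biUnion_nonempty.2 ⟨hWfne.choose, hWfne.choose_spec, hHne.image _⟩
  have hHWsum : ∀ u : ℕ → S,
      ∑ s ∈ HW, ((u s : S) : ℝ) = ∑ i ∈ Wf, ∑ t ∈ H, ((u (τ i t) : S) : ℝ) := by
    intro u
    rw [hHW, Finset.sum_biUnion]
    · exact Finset.sum_congr rfl fun i _ =>
        Finset.sum_image (fun a _ b _ h => (hτinj h).2)
    · intro i _ j _ hij
      simp only [Function.onFun]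
      refine Finset.disjoint_left.2 fun s hs hs' => hij ?_
      obtain ⟨t, _, rfl⟩ := Finset.mem_image.1 hs
      obtain ⟨t', _, h⟩ := Finset.mem_image.1 hs'
      exact ((hτinj h).1).symm
  have hfθsum : ∀ f : {f // f ∈ F}, ∑ t ∈ H, (((f : ℕ → S)) (θ t) : ℝ) ≤ η := by
    intro f
    have := hkey id Function.injective_id _ (hmemF f) H
    simpa using this
  have hlettersum : ∀ (g : {g // g ∈ F₀}) (i : ι),
      ∑ t ∈ H, (((g : ℕ → S)) (τ i t) : ℝ) ≤ η := by
    intro g i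
    exact hkey (fun t => Nat.pair (e i) t) (fun t t' h => (Nat.pair_eq_pair.1 h).2)
      _ (hmemF₀ g) H
  have hRle : R ≤ (n : ℝ) * η := by
    calc R ≤ ∑ _i ∈ Wc, η := Finset.sum_le_sum fun i _ => hlettersum (letter i) i
      _ = (Wc.card : ℝ) * η := by rw [Finset.sum_const, nsmul_eq_mul]
      _ ≤ (n : ℝ) * η := by
          have h1 : Wc.card ≤ n := by
            rw [hn, ← Finset.card_univ]
            exact Finset.card_filter_le _ _
          exact mul_le_mul_of_nonneg_right (by exact_mod_cast h1) hηpos.le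
  have hR0 : 0 ≤ R := Finset.sum_nonneg fun i _ => Finset.sum_nonneg fun t _ =>
    (hpos _ (((letter i : ℕ → S)) (τ i t)).2).le
  -- every color is `true`
  have hc₀ : ∀ f : {f // f ∈ F}, c₀ f = true := by
    intro f
    set A₁ : ℝ := (a : ℝ) + (∑ t ∈ H, (((f : ℕ → S)) (θ t) : ℝ)) + R with hA₁
    have hA₁S : A₁ ∈ S := by
      have h1 : (a : ℝ) + (∑ t ∈ H, (((f : ℕ → S)) (θ t) : ℝ)) ∈ S :=
        S.add_mem a.2 (sum_mem_S S hHne fun t _ => ((f : ℕ → S) (θ t)).2)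
      rcases Wc.eq_empty_or_nonempty with hWc0 | hWc0
      · have hR00 : R = 0 := by rw [hR, hWc0, Finset.sum_empty]
        rw [hA₁, hR00, add_zero]; exact h1
      · exact S.add_mem h1 (sum_mem_S S hWc0 fun i _ =>
          sum_mem_S S hHne fun t _ => (((letter i : ℕ → S)) (τ i t)).2)
    have hA₁lt : A₁ < δ₀ := by
      have h1 := hfθsum f
      have h2 : m ≤ δ₀ := min_le_right _ _
      rw [hA₁]
      nlinarith [hηpos]
    obtain ⟨g, hgF₀, hgC⟩ := hstar ⟨A₁, hA₁S⟩ hA₁lt HW hHWne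
    obtain ⟨b, hbCD, hbval⟩ := hmem' (l ⟨g, hgF₀⟩) f
    have hval : (b : ℝ) = A₁ + ∑ s ∈ HW, ((g s : S) : ℝ) := by
      rw [hbval, hsum_exp, hsplit, hHWsum (fun s => g s)]
      rw [hA₁]; ring
    have hbD : b ∈ D := by
      rcases hbCD with hbC | hbD
      · exact absurd hval (hgC b hbC)
      · exact hbD
    have hcoltrue : col (l ⟨g, hgF₀⟩) f = true := by
      rw [hcol]
      exact decide_eq_true ⟨b, hbD, hbval⟩
    have h := congrFun (hl ⟨g, hgF₀⟩) f
    rw [← h]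
    exact hcoltrue
  -- conclusion: read off the witnesses at an arbitrary point of the line
  have hfinal : ∀ f : {f // f ∈ F},
      ∃ b ∈ D, (b : ℝ) = (a : ℝ) + ∑ t ∈ H, ((hyb (l x₀) f t : S) : ℝ) := by
    intro f
    have h := congrFun (hl x₀) f
    have h2 : col (l x₀) f = true := by rw [h]; exact hc₀ f
    rw [hcol] at h2
    exact of_decide_eq_true h2
  have ha''S : ((a : ℝ) + ∑ i : ι, ∑ t ∈ H, (((l x₀ i : ℕ → S)) (τ i t) : ℝ)) ∈ S :=
    S.add_mem a.2 (sum_mem_S S Finset.univ_nonempty fun i _ =>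
      sum_mem_S S hHne fun t _ => (((l x₀ i : ℕ → S)) (τ i t)).2)
  refine ⟨⟨_, ha''S⟩, ?_, H.image θ, hHne.image θ, ?_⟩
  · show (a : ℝ) + ∑ i : ι, ∑ t ∈ H, (((l x₀ i : ℕ → S)) (τ i t) : ℝ) < δ
    have hSig : ∑ i : ι, ∑ t ∈ H, (((l x₀ i : ℕ → S)) (τ i t) : ℝ) ≤ (n : ℝ) * η := by
      calc ∑ i : ι, ∑ t ∈ H, (((l x₀ i : ℕ → S)) (τ i t) : ℝ) ≤ ∑ _i : ι, η :=
            Finset.sum_le_sum fun i _ => hlettersum (l x₀ i) i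
        _ = (n : ℝ) * η := by rw [Finset.sum_const, Finset.card_univ, nsmul_eq_mul, hn]
    have h2 : m ≤ δ := min_le_left _ _
    nlinarith [hηpos]
  · intro f hf
    obtain ⟨b, hbD, hbval⟩ := hfinal ⟨f, hf⟩
    refine ⟨b, hbD, ?_⟩
    have himg : ∑ s ∈ H.image θ, ((f s : S) : ℝ) = ∑ t ∈ H, ((f (θ t) : S) : ℝ) :=
      Finset.sum_image fun a _ b _ h => hθmono.injective h
    show (b : ℝ) = ((a : ℝ) + ∑ i : ι, ∑ t ∈ H, (((l x₀ i : ℕ → S)) (τ i t) : ℝ)) +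
      ∑ s ∈ H.image θ, ((f s : S) : ℝ)
    rw [hbval, hsum_exp, himg]
    ring

open StmtAux in
lemma not_J_far (S : AddSubsemigroup ℝ) (hpos : ∀ x : ℝ, x ∈ S → 0 < x)
    (hdense : Set.Ioi (0 : ℝ) ⊆ closure (S : Set ℝ)) {ε : ℝ} (hε : 0 < ε) :
    ¬ JSetNearZero S ({x : S | (x : ℝ) < ε}ᶜ) := by
  classical
  intro hJ
  obtain ⟨f, hf⟩ := exists_seq_lt S hdense (fun n => ε * (1/2)^(n+1) / 2)
    (fun n => by positivity)
  have hft : Tendsto (fun n => ((f n : S) : ℝ)) atTop (nhds 0) := by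
    refine tendsto_of_lt S hpos hf ?_
    have h := (tendsto_pow_atTop_nhds_zero_of_lt_one (r := (1:ℝ)/2) (by norm_num)
      (by norm_num)).const_mul (ε * (1/2) / 2)
    rw [mul_zero] at h
    refine h.congr fun t => ?_
    rw [pow_succ]; ring
  obtain ⟨a, ha, H, hHne, hb⟩ := hJ {f} ⟨f, by simp⟩
    (by intro u hu; rw [Finset.mem_singleton] at hu; subst hu; exact hft) (ε/2) (half_pos hε)
  obtain ⟨b, hbmem, hbval⟩ := hb f (by simp)
  have hsum : ∑ t ∈ H, ((f t : S) : ℝ) ≤ ε/2 := by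
    have h1 : ∑ t ∈ H, ((f t : S) : ℝ) ≤ ∑ t ∈ H, ε * ((1:ℝ)/2)^(t+1) / 2 :=
      Finset.sum_le_sum fun t _ => (hf t).le
    have h2 : ∑ t ∈ H, ε * ((1:ℝ)/2)^(t+1) / 2 = (ε/2) * ∑ t ∈ H, ((1:ℝ)/2)^(t+1) := by
      rw [Finset.mul_sum]; exact Finset.sum_congr rfl fun t _ => by ring
    have h3 := geom_sum_le_one H
    nlinarith
  have : (b : ℝ) < ε := by rw [hbval]; linarith
  exact hbmem this

open StmtAux in
theorem stmt11 (S : AddSubsemigroup ℝ)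
    (hpos : ∀ x : ℝ, x ∈ S → 0 < x)
    (hdense : Set.Ioi (0 : ℝ) ⊆ closure (S : Set ℝ)) :
    Set.univ ∈ KJ S ∧ ∅ ∉ KJ S ∧
    (∀ A B : Set S, A ∈ KJ S → A ⊆ B → B ∈ KJ S) ∧
    (∀ A B : Set S, A ∈ KJ S → B ∈ KJ S → A ∩ B ∈ KJ S) ∧
    {p : Ultrafilter S | ∀ A ∈ KJ S, A ∈ p} = J0 S ∧
    IsCompact (J0 S) ∧
    ∀ p ∈ J0 S, ∀ q ∈ J0 S, uadd p q ∈ J0 S := by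
  classical
  -- a null sequence in S
  obtain ⟨f₁, hf₁⟩ := exists_seq_lt S hdense (fun n => 1/(n+1)) (fun n => by positivity)
  have hf₁t : Tendsto (fun n => ((f₁ n : S) : ℝ)) atTop (nhds 0) :=
    tendsto_of_lt S hpos hf₁ tendsto_one_div_add_atTop_nhds_zero_nat
  -- (1) univ ∈ KJ
  have h1 : Set.univ ∈ KJ S := by
    intro hJ
    obtain ⟨a, -, H, -, hb⟩ := hJ {f₁} ⟨f₁, by simp⟩
      (by intro u hu; rw [Finset.mem_singleton] at hu; subst hu; exact hf₁t) 1 one_pos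
    obtain ⟨b, hbmem, -⟩ := hb f₁ (by simp)
    simp at hbmem
  -- (2) ∅ ∉ KJ
  have h2 : (∅ : Set S) ∉ KJ S := by
    intro h
    apply h
    intro F hFne hFnull δ hδ
    obtain ⟨a, ha⟩ := exists_small S hdense hδ
    refine ⟨a, ha, {0}, ⟨0, by simp⟩, fun f hf => ?_⟩
    exact ⟨a + f 0, by simp, by push_cast [Finset.sum_singleton]; ring⟩
  -- (3) upward closed
  have h3 : ∀ A B : Set S, A ∈ KJ S → A ⊆ B → B ∈ KJ S := by
    intro A B hA hAB hJB
    exact hA (J_mono S hJB (compl_subset_compl.2 hAB))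
  -- (4) intersection
  have h4 : ∀ A B : Set S, A ∈ KJ S → B ∈ KJ S → A ∩ B ∈ KJ S := by
    intro A B hA hB hJ
    have hJ' : JSetNearZero S (Aᶜ ∪ Bᶜ) := by
      refine J_mono S hJ ?_
      rw [Set.compl_inter]
    exact hB (J_union S hpos hJ' hA)
  -- (5) the set of ultrafilters containing KJ is J0
  have h5 : {p : Ultrafilter S | ∀ A ∈ KJ S, A ∈ p} = J0 S := by
    ext p
    simp only [Set.mem_setOf_eq]
    constructor
    · intro hp
      refine ⟨?_, ?_⟩
      · intro ε hε
        refine hp _ ?_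
        show ¬ JSetNearZero S ({x : S | (x : ℝ) < ε}ᶜ)
        exact not_J_far S hpos hdense hε
      · intro A hA
        by_contra hnJ
        have hAc : Aᶜ ∈ KJ S := by
          show ¬ JSetNearZero S Aᶜᶜ
          rw [compl_compl]
          exact hnJ
        exact (Ultrafilter.compl_notMem_iff.2 hA) (hp _ hAc)
    · rintro ⟨hpO, hpJ⟩ A hA
      by_contra hnA
      have hAc : Aᶜ ∈ p := Ultrafilter.compl_mem_iff_notMem.2 hnA
      exact hA (hpJ _ hAc)
  -- (6) compactness
  have h6 : IsCompact (J0 S) := by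
    have hclosed : IsClosed (J0 S) := by
      rw [← h5]
      have : {p : Ultrafilter S | ∀ A ∈ KJ S, A ∈ p} =
          ⋂ A ∈ KJ S, {p : Ultrafilter S | A ∈ p} := by
        ext p; simp
      rw [this]
      exact isClosed_biInter fun A _ => ultrafilter_isClosed_basic A
    exact hclosed.isCompact
  -- (7) closed under uadd
  have h7 : ∀ p ∈ J0 S, ∀ q ∈ J0 S, uadd p q ∈ J0 S := by
    rintro p ⟨hpO, hpJ⟩ q ⟨hqO, hqJ⟩
    constructor
    · -- Oplus
      intro ε hε
      rw [mem_uadd]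
      refine Filter.mem_of_superset (hpO (ε/2) (half_pos hε)) ?_
      intro a ha
      simp only [Set.mem_setOf_eq] at ha ⊢
      refine Filter.mem_of_superset (hqO (ε/2) (half_pos hε)) ?_
      intro x hx
      simp only [Set.mem_setOf_eq] at hx ⊢
      push_cast
      linarith
    · -- all members are J-sets
      intro A hA
      have hB : {s : S | {x : S | s + x ∈ A} ∈ q} ∈ p := mem_uadd.1 hA
      have hBJ := hpJ _ hB
      intro F hFne hFnull δ hδ
      obtain ⟨a, ha, H, hHne, hw⟩ := hBJ F hFne hFnull (δ/2) (half_pos hδ)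
      choose c hcB hcval using hw
      have hT : ({x : S | (x : ℝ) < δ/2} ∩
          ⋂ f ∈ F.attach, {x : S | c f.1 f.2 + x ∈ A}) ∈ q := by
        refine Filter.inter_mem (hqO (δ/2) (half_pos hδ)) ?_
        exact (Filter.biInter_finset_mem F.attach).2 fun f _ => hcB f.1 f.2
      obtain ⟨d, hd1, hd2⟩ := Ultrafilter.nonempty_of_mem hT
      refine ⟨a + d, ?_, H, hHne, fun f hf => ?_⟩
      · have : (d : ℝ) < δ/2 := hd1
        push_cast
        linarith
      · refine ⟨c f hf + d, ?_, ?_⟩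
        · have := Set.mem_iInter₂.1 hd2 ⟨f, hf⟩ (F.mem_attach _)
          exact this
        · push_cast
          rw [hcval f hf]
          ring
  exact ⟨h1, h2, h3, h4, h5, h6, h7⟩
end
end

section
/- Let S be a dense subsemigroup of ((0,∞),+) and A ⊆ S. Then A is quasi-central near zero (i.e., A is a member of an idempotent in the closure of K(O⁺(S))) if and only if there exists a dynamical system (X, ⟨T_s⟩_{s∈S}), points x, y ∈ X forming a JIUR₀ pair, and a neighborhood U of y with A = {s ∈ S : T_s(x) ∈ U}. -/
open Filter Topology Set

noncomputable section

attribute [local instance] Ultrafilter.add Ultrafilter.addSemigroup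


section Basics
variable {S : AddSubsemigroup ℝ}

lemma mem_uadd {A : Set S} {p q : Ultrafilter S} :
    A ∈ uadd p q ↔ {a | {b | a + b ∈ A} ∈ q} ∈ p := Iff.rfl

lemma uadd_assoc (p q r : Ultrafilter S) : uadd (uadd p q) r = uadd p (uadd q r) :=
  add_assoc p q r

lemma continuous_uadd_left (q : Ultrafilter S) : Continuous (uadd · q) :=
  Ultrafilter.continuous_add_left q

lemma exists_ultrafilter_forall {α ι : Type} (f : ι → Set α)
    (h : ∀ u : Finset ι, ∃ x : α, ∀ i ∈ u, x ∈ f i) :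
    ∃ r : Ultrafilter α, ∀ i, f i ∈ r := by
  have hne := (isCompact_univ (X := Ultrafilter α)).inter_iInter_nonempty
    (fun i => {p : Ultrafilter α | f i ∈ p})
    (fun i => ultrafilter_isClosed_basic _) (fun u => by
      obtain ⟨x, hx⟩ := h u
      refine ⟨pure x, trivial, ?_⟩
      simp only [mem_iInter, mem_setOf_eq, Ultrafilter.mem_pure]
      exact hx)
  obtain ⟨r, -, hr⟩ := hne
  simp only [mem_iInter, mem_setOf_eq] at hr
  exact ⟨r, hr⟩

lemma exists_small (hdense : Set.Ioi (0 : ℝ) ⊆ closure (S : Set ℝ)) {ε : ℝ} (hε : 0 < ε) :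
    ∃ s : S, (s : ℝ) < ε := by
  have h2 : (ε / 2) ∈ closure (S : Set ℝ) := hdense (by simp [half_pos hε])
  rcases mem_closure_iff.mp h2 (Ioo 0 ε) isOpen_Ioo ⟨half_pos hε, half_lt_self hε⟩ with
    ⟨x, hx1, hx2⟩
  exact ⟨⟨x, hx2⟩, hx1.2⟩

lemma Oplus_isClosed : IsClosed (Oplus S) := by
  have : Oplus S = ⋂ (ε : ℝ) (_ : 0 < ε), {p : Ultrafilter S | {x : S | (x : ℝ) < ε} ∈ p} := by
    ext p; simp [Oplus]
  rw [this]
  exact isClosed_iInter fun ε => isClosed_iInter fun _ => ultrafilter_isClosed_basic _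

lemma Oplus_add {p q : Ultrafilter S} (hp : p ∈ Oplus S) (hq : q ∈ Oplus S) :
    uadd p q ∈ Oplus S := by
  intro ε hε
  rw [mem_uadd]
  filter_upwards [hp (ε/2) (half_pos hε)] with a ha
  filter_upwards [hq (ε/2) (half_pos hε)] with b hb
  show ((a + b : S) : ℝ) < ε
  have hco : ((a + b : S) : ℝ) = (a : ℝ) + (b : ℝ) := rfl
  rw [hco]
  calc (a : ℝ) + b < ε/2 + ε/2 := add_lt_add ha hb
  _ = ε := add_halves ε

lemma Oplus_nonempty (hdense : Set.Ioi (0 : ℝ) ⊆ closure (S : Set ℝ)) :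
    (Oplus S).Nonempty := by
  obtain ⟨r, hr⟩ := exists_ultrafilter_forall (ι := {ε : ℝ // 0 < ε})
    (fun ε => {x : S | (x : ℝ) < ε.1}) (fun u => by
      rcases u.eq_empty_or_nonempty with rfl | hu
      · obtain ⟨s, hs⟩ := exists_small hdense one_pos
        exact ⟨s, by simp⟩
      · set m := u.min' hu
        obtain ⟨s, hs⟩ := exists_small hdense m.2
        exact ⟨s, fun i hi => lt_of_lt_of_le hs (by exact_mod_cast u.min'_le i hi)⟩)
  exact ⟨r, fun ε hε => hr ⟨ε, hε⟩⟩

end Basics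
section Ideals
variable {S : AddSubsemigroup ℝ}

lemma rho_image_isLeftIdeal {r : Ultrafilter S} (hr : r ∈ Oplus S)
    (hne : (Oplus S).Nonempty) :
    IsLeftIdealIn (Oplus S) ((uadd · r) '' Oplus S) ∧ IsClosed ((uadd · r) '' Oplus S) := by
  constructor
  · refine ⟨hne.image _, ?_, ?_⟩
    · rintro _ ⟨p, hp, rfl⟩; exact Oplus_add hp hr
    · rintro p hp _ ⟨p', hp', rfl⟩
      exact ⟨uadd p p', Oplus_add hp hp', (uadd_assoc p p' r)⟩
  · exact (Oplus_isClosed.isCompact.image (continuous_uadd_left r)).isClosed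

/-- every member of a left ideal generates a closed left sub-ideal -/
lemma rho_image_subset {L : Set (Ultrafilter S)} (hL : IsLeftIdealIn (Oplus S) L)
    {w : Ultrafilter S} (hw : w ∈ L) : (uadd · w) '' Oplus S ⊆ L := by
  rintro _ ⟨p, hp, rfl⟩; exact hL.2.2 p hp w hw

lemma exists_minimal_leftIdeal (hdense : Set.Ioi (0 : ℝ) ⊆ closure (S : Set ℝ))
    {L : Set (Ultrafilter S)} (hL : IsLeftIdealIn (Oplus S) L) (hLc : IsClosed L) :
    ∃ L', IsMinimalLeftIdealIn (Oplus S) L' ∧ L' ⊆ L := by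
  have hne : (Oplus S).Nonempty := Oplus_nonempty hdense
  set 𝒮 : Set (Set (Ultrafilter S)) :=
    {N | IsClosed N ∧ IsLeftIdealIn (Oplus S) N ∧ N ⊆ L} with h𝒮
  have hzorn : ∃ m, Minimal (· ∈ 𝒮) m := by
    refine zorn_superset 𝒮 fun c hcs hc => ?_
    rcases c.eq_empty_or_nonempty with rfl | hcne
    · exact ⟨L, ⟨hLc, hL, le_refl L⟩, by simp⟩
    refine ⟨⋂₀ c, ⟨isClosed_sInter fun t ht => (hcs ht).1, ⟨?_, ?_, ?_⟩, ?_⟩,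
      fun s hs => Set.sInter_subset_of_mem hs⟩
    · have : (⋂ (t : c), (t : Set (Ultrafilter S))).Nonempty := by
        refine IsCompact.nonempty_iInter_of_directed_nonempty_isCompact_isClosed
          (hι := hcne.coe_sort) _ (DirectedOn.directed_val (IsChain.directedOn hc.symm))
          (fun t => (hcs t.prop).2.1.1) (fun t => (hcs t.prop).1.isCompact)
          (fun t => (hcs t.prop).1)
      rwa [Set.sInter_eq_iInter]
    · obtain ⟨t, ht⟩ := hcne
      exact (Set.sInter_subset_of_mem ht).trans (hcs ht).2.1.2.1
    · intro p hp q hq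
      rw [Set.mem_sInter] at hq ⊢
      exact fun t ht => (hcs ht).2.1.2.2 p hp q (hq t ht)
    · obtain ⟨t, ht⟩ := hcne
      exact (Set.sInter_subset_of_mem ht).trans (hcs ht).2.2
  obtain ⟨L₀, hmin⟩ := hzorn
  obtain ⟨hL₀c, hL₀ideal, hL₀L⟩ := hmin.prop
  refine ⟨L₀, ⟨hL₀ideal, ?_⟩, hL₀L⟩
  intro L' hL' hsub
  obtain ⟨w, hw⟩ := hL'.1
  have himg : (uadd · w) '' Oplus S ∈ 𝒮 := by
    refine ⟨(rho_image_isLeftIdeal (hL'.2.1 hw) hne).2,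
      (rho_image_isLeftIdeal (hL'.2.1 hw) hne).1, ((rho_image_subset hL' hw).trans hsub).trans hL₀L⟩
  have h1 : (uadd · w) '' Oplus S ⊆ L₀ := (rho_image_subset hL' hw).trans hsub
  have := hmin.eq_of_subset himg h1
  have h2 : L₀ ⊆ L' := by rw [← this]; exact rho_image_subset hL' hw
  exact le_antisymm hsub h2

lemma KOplus_subset_Oplus : KOplus S ⊆ Oplus S := by
  rintro p ⟨L, hL, hp⟩; exact hL.1.2.1 hp

lemma minimal_isClosed {L : Set (Ultrafilter S)} (hL : IsMinimalLeftIdealIn (Oplus S) L)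
    (hne : (Oplus S).Nonempty) : IsClosed L := by
  obtain ⟨w, hw⟩ := hL.1.1
  have h1 := rho_image_isLeftIdeal (hL.1.2.1 hw) hne
  have := hL.2 _ h1.1 (rho_image_subset hL.1 hw)
  rw [← this]; exact h1.2

/-- `K` is a left ideal. -/
lemma KOplus_add_left {p w : Ultrafilter S} (hp : p ∈ Oplus S) (hw : w ∈ KOplus S) :
    uadd p w ∈ KOplus S := by
  obtain ⟨L, hL, hwL⟩ := hw
  exact ⟨L, hL, hL.1.2.2 p hp w hwL⟩

/-- `K` is a right ideal. -/
lemma KOplus_add_right {w q : Ultrafilter S} (hw : w ∈ KOplus S) (hq : q ∈ Oplus S) :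
    uadd w q ∈ KOplus S := by
  obtain ⟨L, hL, hwL⟩ := hw
  refine ⟨(uadd · q) '' L, ⟨⟨⟨hL.1.1.image _, ?_, ?_⟩, ?_⟩, ⟨w, hwL, rfl⟩⟩⟩
  · rintro _ ⟨ℓ, hℓ, rfl⟩; exact Oplus_add (hL.1.2.1 hℓ) hq
  · rintro p hp _ ⟨ℓ, hℓ, rfl⟩
    exact ⟨uadd p ℓ, hL.1.2.2 p hp ℓ hℓ, (uadd_assoc p ℓ q)⟩
  · intro L' hL' hsub
    set M : Set (Ultrafilter S) := {ℓ ∈ L | uadd ℓ q ∈ L'} with hM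
    have hMideal : IsLeftIdealIn (Oplus S) M := by
      refine ⟨?_, fun ℓ hℓ => hL.1.2.1 hℓ.1, ?_⟩
      · obtain ⟨v, hv⟩ := hL'.1
        obtain ⟨ℓ, hℓ, rfl⟩ := hsub hv
        exact ⟨ℓ, hℓ, hv⟩
      · intro p hp ℓ hℓ
        refine ⟨hL.1.2.2 p hp ℓ hℓ.1, ?_⟩
        rw [uadd_assoc]
        exact hL'.2.2 p hp _ hℓ.2
    have hML := hL.2 M hMideal (fun ℓ hℓ => hℓ.1)
    apply le_antisymm hsub
    rintro _ ⟨ℓ, hℓ, rfl⟩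
    rw [← hML] at hℓ
    exact hℓ.2

lemma KOplus_nonempty (hdense : Set.Ioi (0 : ℝ) ⊆ closure (S : Set ℝ)) :
    (KOplus S).Nonempty := by
  obtain ⟨r, hr⟩ := Oplus_nonempty hdense
  obtain ⟨L, hL, hsub⟩ := exists_minimal_leftIdeal hdense
    (rho_image_isLeftIdeal hr ⟨r, hr⟩).1 (rho_image_isLeftIdeal hr ⟨r, hr⟩).2
  obtain ⟨w, hw⟩ := hL.1.1
  exact ⟨w, L, hL, hw⟩

lemma closure_KOplus_subset : closure (KOplus S) ⊆ Oplus S :=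
  closure_minimal KOplus_subset_Oplus Oplus_isClosed

lemma closure_KOplus_add_right {p q : Ultrafilter S} (hp : p ∈ closure (KOplus S))
    (hq : q ∈ Oplus S) : uadd p q ∈ closure (KOplus S) := by
  have : uadd p q ∈ (uadd · q) '' closure (KOplus S) := ⟨p, hp, rfl⟩
  have h2 : (uadd · q) '' closure (KOplus S) ⊆ closure ((uadd · q) '' KOplus S) :=
    image_closure_subset_closure_image (continuous_uadd_left q)
  refine closure_mono ?_ (h2 this)
  rintro _ ⟨w, hw, rfl⟩
  exact KOplus_add_right hw hq

end Ideals
section PWS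
variable {S : AddSubsemigroup ℝ}

lemma mem_KOplus_pws (hpos : ∀ x : ℝ, x ∈ S → 0 < x)
    (hdense : Set.Ioi (0 : ℝ) ⊆ closure (S : Set ℝ))
    {q : Ultrafilter S} {B : Set S} (hq : q ∈ KOplus S) (hB : B ∈ q) :
    piecewiseSyndeticNearZero S B := by
  classical
  obtain ⟨L, hL, hqL⟩ := hq
  have hne : (Oplus S).Nonempty := Oplus_nonempty hdense
  have hqO : q ∈ Oplus S := hL.1.2.1 hqL
  have hLclosed := minimal_isClosed hL hne
  have hLeq : ∀ w ∈ L, (uadd · w) '' Oplus S = L := fun w hw =>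
    hL.2 _ (rho_image_isLeftIdeal (hL.1.2.1 hw) hne).1 (rho_image_subset hL.1 hw)
  have key : ∀ n : ℕ, ∃ (F : Finset S) (δ : ℝ), F.Nonempty ∧
      (∀ t ∈ F, (t : ℝ) < 1 / (n + 1)) ∧ 0 < δ ∧ δ < 1 / (n + 1) ∧
      ∀ a : S, (a : ℝ) < δ → {s : S | a + s ∈ {s : S | ∃ t ∈ F, t + s ∈ B}} ∈ q := by
    intro n
    have hεn : (0 : ℝ) < 1 / (n + 1) := by positivity
    -- Step A: finite cover of L
    have hcov : ∀ w ∈ L, ∃ t : S, (t : ℝ) < 1 / (n + 1) ∧ {s : S | t + s ∈ B} ∈ w := by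
      intro w hw
      have : q ∈ (uadd · w) '' Oplus S := by rw [hLeq w hw]; exact hqL
      obtain ⟨p, hp, hpq⟩ := this
      have hB' : {a : S | {s : S | a + s ∈ B} ∈ w} ∈ p := by
        have h2 : uadd p w = q := hpq
        have h3 : B ∈ uadd p w := by rw [h2]; exact hB
        exact h3
      obtain ⟨t, ht⟩ := p.nonempty_of_mem (inter_mem hB' (hp _ hεn))
      exact ⟨t, ht.2, ht.1⟩
    obtain ⟨u, hu⟩ := hLclosed.isCompact.elim_finite_subcover
      (fun t : {t : S // (t : ℝ) < 1 / (n + 1)} => {w : Ultrafilter S | {s : S | t.1 + s ∈ B} ∈ w})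
      (fun t => ultrafilter_isOpen_basic _)
      (fun w hw => by
        obtain ⟨t, ht1, ht2⟩ := hcov w hw
        exact Set.mem_iUnion.mpr ⟨⟨t, ht1⟩, ht2⟩)
    set F : Finset S := u.image Subtype.val with hF
    have hFD : ∀ w ∈ L, {s : S | ∃ t ∈ F, t + s ∈ B} ∈ w := by
      intro w hw
      obtain ⟨i, hiu, hiw⟩ := Set.mem_iUnion₂.mp (hu hw)
      refine w.toFilter.mem_of_superset hiw ?_
      intro s hs
      exact ⟨i.1, Finset.mem_image_of_mem _ hiu, hs⟩
    have hFne : F.Nonempty := by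
      obtain ⟨w, hw⟩ := hL.1.1
      obtain ⟨i, hiu, _⟩ := Set.mem_iUnion₂.mp (hu hw)
      exact ⟨i.1, Finset.mem_image_of_mem _ hiu⟩
    have hFsmall : ∀ t ∈ F, (t : ℝ) < 1 / (n + 1) := by
      intro t ht
      obtain ⟨i, _, rfl⟩ := Finset.mem_image.mp ht
      exact i.2
    -- Step B: find δ
    set D : Set S := {s : S | ∃ t ∈ F, t + s ∈ B} with hD
    set E : Set S := {a : S | {s : S | a + s ∈ D} ∈ q} with hE
    have hδ : ∃ δ : ℝ, 0 < δ ∧ ∀ a : S, (a : ℝ) < δ → a ∈ E := by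
      by_contra hcon
      push_neg at hcon
      obtain ⟨r, hr⟩ := exists_ultrafilter_forall (ι := {δ : ℝ // 0 < δ})
        (fun δ => {a : S | (a : ℝ) < δ.1 ∧ a ∉ E}) (fun v => by
          rcases v.eq_empty_or_nonempty with rfl | hv
          · obtain ⟨a, ha1, ha2⟩ := hcon 1 one_pos
            exact ⟨a, by simp⟩
          · set m := v.min' hv
            obtain ⟨a, ha1, ha2⟩ := hcon m m.2
            exact ⟨a, fun i hi => ⟨lt_of_lt_of_le ha1 (by exact_mod_cast v.min'_le i hi), ha2⟩⟩)
      have hrO : r ∈ Oplus S := by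
        intro ε hε
        exact r.toFilter.mem_of_superset (hr ⟨ε, hε⟩) (fun a ha => ha.1)
      have hrE : Eᶜ ∈ r :=
        r.toFilter.mem_of_superset (hr ⟨1, one_pos⟩) (fun a ha => ha.2)
      have hrq : uadd r q ∈ L := hL.1.2.2 r hrO q hqL
      have hDrq : D ∈ uadd r q := hFD _ hrq
      have hEr : E ∈ r := hDrq
      obtain ⟨a, ha⟩ := r.nonempty_of_mem (inter_mem hEr hrE)
      exact ha.2 ha.1
    obtain ⟨δ, hδpos, hδE⟩ := hδ
    refine ⟨F, min δ (1 / (n + 2)), hFne, hFsmall, ?_, ?_, ?_⟩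
    · exact lt_min hδpos (by positivity)
    · calc min δ (1 / (n + 2)) ≤ 1 / (n + 2) := min_le_right _ _
        _ < 1 / (n + 1) := by
          apply one_div_lt_one_div_of_lt <;> [positivity; linarith]
    · intro a ha
      exact hδE a (lt_of_lt_of_le ha (min_le_left _ _))
  choose F δ hFne hFsmall hδpos hδlt hE using key
  refine ⟨F, δ, fun n => ⟨hFne n, hFsmall n, hδpos n, hδlt n⟩, ?_⟩
  intro G μ hμ
  rcases G.eq_empty_or_nonempty with rfl | hG
  · obtain ⟨x, hx⟩ := exists_small hdense hμ
    exact ⟨x, hx, by simp⟩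
  · have hGrne : (G.image (fun g : S => (g : ℝ))).Nonempty := hG.image _
    set Gr : Finset ℝ := G.image (fun g : S => (g : ℝ)) with hGr
    set m : ℝ := Gr.min' hGrne with hm
    have hmpos : 0 < m := by
      obtain ⟨g, hg, hgm⟩ := Finset.mem_image.mp (Gr.min'_mem hGrne)
      rw [hm, ← hgm]; exact hpos g g.2
    set M : ℕ := Nat.ceil (1 / m) with hM
    have hmem : ∀ n ∈ Finset.range M, ∀ g ∈ G,
        {x : S | (g : ℝ) < δ n → g + x ∈ {s : S | ∃ t ∈ F n, t + s ∈ B}} ∈ q := by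
      intro n _ g _
      by_cases h : (g : ℝ) < δ n
      · exact q.toFilter.mem_of_superset (hE n g h) (fun x hx _ => hx)
      · exact q.toFilter.mem_of_superset univ_mem (fun x _ hc => absurd hc h)
    have hbig : (⋂ n ∈ Finset.range M, ⋂ g ∈ G,
        {x : S | (g : ℝ) < δ n → g + x ∈ {s : S | ∃ t ∈ F n, t + s ∈ B}}) ∈ q := by
      show _ ∈ (q : Filter S)
      exact (Filter.biInter_finset_mem _).mpr fun n hn =>
        (Filter.biInter_finset_mem _).mpr fun g hg => hmem n hn g hg
    obtain ⟨x, hx⟩ := q.nonempty_of_mem (inter_mem (hqO μ hμ) hbig)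
    refine ⟨x, hx.1, ?_⟩
    intro n g hg hgδ
    have hnM : n ∈ Finset.range M := by
      rw [Finset.mem_range]
      have h1 : m ≤ (g : ℝ) := Gr.min'_le _ (Finset.mem_image_of_mem _ hg)
      have h2 : (g : ℝ) < 1 / (n + 1) := lt_trans hgδ (hδlt n)
      have h5 : m < 1 / ((n : ℝ) + 1) := lt_of_le_of_lt h1 h2
      have h6 : m * ((n : ℝ) + 1) < 1 := (lt_div_iff₀ (by positivity)).mp h5
      have h3 : (n : ℝ) + 1 < 1 / m := (lt_div_iff₀ hmpos).mpr (by nlinarith)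
      have h4 : (1 : ℝ) / m ≤ M := Nat.le_ceil _
      have h7 : (n : ℝ) + 1 < M := lt_of_lt_of_le h3 h4
      exact_mod_cast Nat.lt_of_add_one_le (by exact_mod_cast h7.le)
    exact Set.mem_iInter₂.mp (Set.mem_iInter₂.mp hx.2 n hnM) g hg hgδ

end PWS
section PWS2
variable {S : AddSubsemigroup ℝ}

lemma pws_exists_mem_KOplus (hdense : Set.Ioi (0 : ℝ) ⊆ closure (S : Set ℝ))
    {B : Set S} (hB : piecewiseSyndeticNearZero S B) : ∃ q ∈ KOplus S, B ∈ q := by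
  classical
  obtain ⟨F, δ, hFδ, hW⟩ := hB
  set D : ℕ → Set S := fun n => {s : S | ∃ t ∈ F n, t + s ∈ B} with hD
  obtain ⟨s0, hs0⟩ := exists_small hdense one_pos
  obtain ⟨r, hr⟩ := exists_ultrafilter_forall
    (ι := {ε : ℝ // 0 < ε} ⊕ {gn : S × ℕ // (gn.1 : ℝ) < δ gn.2})
    (Sum.elim (fun ε => {x : S | (x : ℝ) < ε.1})
      (fun gn => {x : S | gn.1.1 + x ∈ D gn.1.2}))
    (fun u => by
      set εs : Finset ℝ := insert 1 (u.image (Sum.elim (fun ε => ε.1) (fun _ => 1))) with hεs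
      have hεne : εs.Nonempty := ⟨1, Finset.mem_insert_self _ _⟩
      set μ := εs.min' hεne with hμdef
      have hμpos : 0 < μ := by
        apply (Finset.lt_min'_iff εs hεne).mpr
        intro y hy
        rcases Finset.mem_insert.mp hy with rfl | hy
        · exact one_pos
        · obtain ⟨i, _, rfl⟩ := Finset.mem_image.mp hy
          cases i with
          | inl ε => exact ε.2
          | inr _ => exact one_pos
      set G : Finset S := insert s0 (u.image (Sum.elim (fun _ => s0) (fun gn => gn.1.1)))
        with hG
      obtain ⟨x, hx, hH⟩ := hW G μ hμpos
      refine ⟨x, fun i hi => ?_⟩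
      cases i with
      | inl ε =>
        have : μ ≤ ε.1 := Finset.min'_le _ _ (Finset.mem_insert_of_mem
          (Finset.mem_image.mpr ⟨Sum.inl ε, hi, rfl⟩))
        exact lt_of_lt_of_le hx this
      | inr gn =>
        have hgG : gn.1.1 ∈ G := Finset.mem_insert_of_mem
          (Finset.mem_image.mpr ⟨Sum.inr gn, hi, rfl⟩)
        obtain ⟨t, htF, htB⟩ := hH gn.1.2 gn.1.1 hgG gn.2
        exact ⟨t, htF, htB⟩)
  have hrO : r ∈ Oplus S := fun ε hε => hr (Sum.inl ⟨ε, hε⟩)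
  have hrD : ∀ (n : ℕ) (g : S), (g : ℝ) < δ n → {x : S | g + x ∈ D n} ∈ r :=
    fun n g h => hr (Sum.inr ⟨(g, n), h⟩)
  have hne : (Oplus S).Nonempty := ⟨r, hrO⟩
  obtain ⟨L, hLmin, hLsub⟩ := exists_minimal_leftIdeal hdense
    (rho_image_isLeftIdeal hrO hne).1 (rho_image_isLeftIdeal hrO hne).2
  have hLD : ∀ w ∈ L, ∀ n : ℕ, D n ∈ w := by
    intro w hw n
    obtain ⟨p, hp, rfl⟩ := hLsub hw
    show {g : S | {x : S | g + x ∈ D n} ∈ r} ∈ p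
    exact p.toFilter.mem_of_superset (hp (δ n) (hFδ n).2.2.1) (fun g hg => hrD n g hg)
  obtain ⟨w, hw⟩ := hLmin.1.1
  have ht : ∀ n : ℕ, ∃ t ∈ F n, {x : S | t + x ∈ B} ∈ w := by
    intro n
    have hDn : D n = ⋃ t ∈ (F n : Set S), {s : S | t + s ∈ B} := by
      ext s; simp [hD]
    have := hLD w hw n
    rw [hDn] at this
    obtain ⟨t, htF, htw⟩ := (Ultrafilter.finite_biUnion_mem_iff (F n).finite_toSet).mp this
    exact ⟨t, htF, htw⟩
  choose t htF htB using ht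
  obtain ⟨v, hv⟩ := exists_clusterPt_of_compactSpace
    (Filter.atTop.map (fun n => (pure (t n) : Ultrafilter S)))
  have hcl : ∀ s ∈ Filter.atTop.map (fun n => (pure (t n) : Ultrafilter S)),
      v ∈ closure s := clusterPt_iff_forall_mem_closure.mp hv
  have hvO : v ∈ Oplus S := by
    intro ε hε
    set C : Set (Ultrafilter S) := {u : Ultrafilter S | {x : S | (x : ℝ) < ε} ∈ u} with hC
    set N : ℕ := Nat.ceil (1 / ε) with hN
    have htail : (fun n => (pure (t n) : Ultrafilter S)) '' Set.Ici N ∈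
        Filter.atTop.map (fun n => (pure (t n) : Ultrafilter S)) := by
      rw [Filter.mem_map]
      exact Filter.mem_of_superset (Filter.Ici_mem_atTop N) (fun n hn => ⟨n, hn, rfl⟩)
    have hsubC : (fun n => (pure (t n) : Ultrafilter S)) '' Set.Ici N ⊆ C := by
      rintro _ ⟨n, hn, rfl⟩
      show {x : S | (x : ℝ) < ε} ∈ (pure (t n) : Ultrafilter S)
      rw [Ultrafilter.mem_pure]
      show ((t n : S) : ℝ) < ε
      have h1 : ((t n : S) : ℝ) < 1 / (n + 1) := (hFδ n).2.1 _ (htF n)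
      have h2 : (1 : ℝ) / (n + 1) ≤ ε := by
        rw [div_le_iff₀ (by positivity)]
        have : (1 : ℝ) / ε ≤ N := Nat.le_ceil _
        have hNn : (N : ℝ) ≤ n := by exact_mod_cast hn
        have : (1 : ℝ) / ε ≤ (n : ℝ) + 1 := by linarith
        rw [div_le_iff₀ hε] at this
        linarith
      linarith
    have := hcl _ htail
    have hCclosed : IsClosed C := ultrafilter_isClosed_basic _
    exact (closure_minimal hsubC hCclosed) this
  have hvT : {a : S | {x : S | a + x ∈ B} ∈ w} ∈ v := by
    set C : Set (Ultrafilter S) := {u : Ultrafilter S | {a : S | {x : S | a + x ∈ B} ∈ w} ∈ u}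
      with hC
    have hrange : Set.range (fun n => (pure (t n) : Ultrafilter S)) ∈
        Filter.atTop.map (fun n => (pure (t n) : Ultrafilter S)) := by
      rw [Filter.mem_map]
      exact Filter.mem_of_superset Filter.univ_mem (fun n _ => ⟨n, rfl⟩)
    have hsubC : Set.range (fun n => (pure (t n) : Ultrafilter S)) ⊆ C := by
      rintro _ ⟨n, rfl⟩
      show {a : S | {x : S | a + x ∈ B} ∈ w} ∈ (pure (t n) : Ultrafilter S)
      rw [Ultrafilter.mem_pure]
      exact htB n
    exact (closure_minimal hsubC (ultrafilter_isClosed_basic _)) (hcl _ hrange)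
  refine ⟨uadd v w, ⟨L, hLmin, hLmin.1.2.2 v hvO w hw⟩, ?_⟩
  exact hvT

lemma mem_closure_KOplus_pws (hpos : ∀ x : ℝ, x ∈ S → 0 < x)
    (hdense : Set.Ioi (0 : ℝ) ⊆ closure (S : Set ℝ))
    {p : Ultrafilter S} {B : Set S} (hp : p ∈ closure (KOplus S)) (hB : B ∈ p) :
    piecewiseSyndeticNearZero S B := by
  obtain ⟨q, hq1, hq2⟩ := mem_closure_iff.mp hp _ (ultrafilter_isOpen_basic B) hB
  exact mem_KOplus_pws hpos hdense hq2 hq1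

end PWS2

section Dyn
variable {S : AddSubsemigroup ℝ} (D : DynSys S)

lemma Tp_tendsto (p : Ultrafilter S) (x : D.X) :
    ↑(p.map fun s => D.T s x) ≤ nhds (D.Tp p x) :=
  Ultrafilter.le_nhds_lim _

lemma Tp_eq_of_le {p : Ultrafilter S} {x y : D.X}
    (h : ↑(p.map fun s => D.T s x) ≤ nhds y) : D.Tp p x = y := by
  have h1 := Tp_tendsto D p x
  have hne : ((p.map fun s => D.T s x : Ultrafilter D.X) : Filter D.X).NeBot :=
    Ultrafilter.neBot _
  exact eq_of_nhds_neBot (Filter.neBot_of_le (le_inf h1 h))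

lemma mem_Tp_nhds {p : Ultrafilter S} {x : D.X} {V : Set D.X}
    (hV : V ∈ nhds (D.Tp p x)) : {s : S | D.T s x ∈ V} ∈ p :=
  Tp_tendsto D p x hV

lemma Tp_mem_closed {C : Set D.X} (hC : IsClosed C) {p : Ultrafilter S} {x : D.X}
    (h : {s : S | D.T s x ∈ C} ∈ p) : D.Tp p x ∈ C := by
  rw [← hC.closure_eq]
  rw [mem_closure_iff_nhds]
  intro U hU
  have hU' : {s : S | D.T s x ∈ U} ∈ p := mem_Tp_nhds D hU
  obtain ⟨s, hs⟩ := p.nonempty_of_mem (inter_mem hU' h)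
  exact ⟨D.T s x, hs.1, hs.2⟩

lemma Tp_continuous (x : D.X) : Continuous fun p => D.Tp p x := by
  have heq : (fun p => D.Tp p x) = Ultrafilter.extend (fun s => D.T s x) := by
    funext p
    exact (ultrafilter_extend_eq_iff.mpr (Tp_tendsto D p x)).symm
  rw [heq]
  exact continuous_ultrafilter_extend _

lemma Tp_uadd (p q : Ultrafilter S) (z : D.X) :
    D.Tp (uadd p q) z = D.Tp p (D.Tp q z) := by
  apply Tp_eq_of_le
  rw [Filter.le_def]
  intro V hV
  obtain ⟨O, hOV, hO, hyO⟩ := mem_nhds_iff.mp hV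
  have hstep : {a : S | D.T a (D.Tp q z) ∈ O} ∈ p :=
    mem_Tp_nhds D (hO.mem_nhds hyO)
  have hmem : {a : S | {b : S | D.T (a + b) z ∈ O} ∈ q} ∈ p := by
    refine p.toFilter.mem_of_superset hstep ?_
    intro a ha
    have h1 : ↑(q.map fun b => D.T a (D.T b z)) ≤ nhds (D.T a (D.Tp q z)) := by
      have := (D.cont a).tendsto (D.Tp q z)
      have h2 := (this.comp (Tp_tendsto D q z) : Filter.Tendsto _ _ _)
      exact h2
    have h3 : {b : S | D.T a (D.T b z) ∈ O} ∈ q := h1 (hO.mem_nhds ha)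
    refine q.toFilter.mem_of_superset h3 ?_
    intro b hb
    show D.T (a + b) z ∈ O
    rw [← congrFun (D.comp a b) z]
    exact hb
  show V ∈ (uadd p q).map fun s => D.T s z
  rw [Ultrafilter.mem_map]
  have : {a : S | {b : S | D.T (a + b) z ∈ O} ∈ q} ⊆
      {a : S | {b : S | a + b ∈ (fun s => D.T s z) ⁻¹' V} ∈ q} := by
    intro a ha
    exact q.toFilter.mem_of_superset ha (fun b hb => hOV hb)
  exact p.toFilter.mem_of_superset hmem this

end Dyn
section Shift
variable {S : AddSubsemigroup ℝ}

def optAdd (o : Option S) (s : S) : Option S :=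
  some (o.elim s (· + s))

def shiftSys (S : AddSubsemigroup ℝ) : DynSys S where
  X := Option S → Bool
  T s f := fun o => f (optAdd o s)
  cont s := continuous_pi fun o => continuous_apply (optAdd o s)
  comp s t := by
    funext f o
    show f (optAdd (optAdd o s) t) = f (optAdd o (s + t))
    congr 1
    cases o with
    | none => rfl
    | some u => show some ((u + s) + t) = some (u + (s + t)); rw [add_assoc]

end Shift
theorem stmt14 (S : AddSubsemigroup ℝ)
    (hpos : ∀ x : ℝ, x ∈ S → 0 < x)
    (hdense : Set.Ioi (0 : ℝ) ⊆ closure (S : Set ℝ))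
    (A : Set S) :
    (∃ p ∈ closure (KOplus S), uadd p p = p ∧ A ∈ p) ↔
      ∃ (D : DynSys S) (x y : D.X), JIUR0 S D x y ∧
        ∃ U ∈ nhds y, A = {s : S | D.T s x ∈ U} := by
  constructor
  · rintro ⟨p, hp, hidem, hA⟩
    classical
    let D := shiftSys S
    let x : D.X := fun o => o.elim true (fun t => decide (t ∈ A))
    let U : Set D.X := {f | f none = true}
    have hUeq : U = (fun f : Option S → Bool => f none) ⁻¹' {true} := rfl
    have hUopen : IsOpen U := by
      rw [hUeq]; exact (continuous_apply none).isOpen_preimage _ (isOpen_discrete _)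
    have hUclosed : IsClosed U := by
      rw [hUeq]; exact IsClosed.preimage (continuous_apply none) (isClosed_discrete _)
    have hretA : {s : S | D.T s x ∈ U} = A := by
      ext s
      show decide (s ∈ A) = true ↔ s ∈ A
      exact decide_eq_true_iff
    let y := D.Tp p x
    have hyU : y ∈ U := Tp_mem_closed D hUclosed (by rw [hretA]; exact hA)
    have hUy : U ∈ nhds y := hUopen.mem_nhds hyU
    have hTpy : D.Tp p y = y := by
      show D.Tp p (D.Tp p x) = D.Tp p x
      rw [← Tp_uadd, hidem]
    refine ⟨D, x, y, ?_, U, hUy, hretA.symm⟩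
    intro V hV
    have h1 : {s : S | D.T s x ∈ V} ∈ p := mem_Tp_nhds D hV
    have h2 : {s : S | D.T s y ∈ V} ∈ p := mem_Tp_nhds D (by rw [hTpy]; exact hV)
    have h3 : {s : S | D.T s x ∈ V ∧ D.T s y ∈ V} ∈ p := inter_mem h1 h2
    exact mem_closure_KOplus_pws hpos hdense hp h3
  · rintro ⟨D, x, y, hJ, U, hUy, hAeq⟩
    classical
    have hfam := (isClosed_closure (s := KOplus S)).isCompact.inter_iInter_nonempty
      (fun V : {V : Set D.X // V ∈ nhds y} =>
        {p : Ultrafilter S | {s : S | D.T s x ∈ V.1 ∧ D.T s y ∈ V.1} ∈ p})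
      (fun V => ultrafilter_isClosed_basic _)
      (fun u => by
        have hW : (⋂ V ∈ u, (V : {V : Set D.X // V ∈ nhds y}).1) ∈ nhds y :=
          (Filter.biInter_finset_mem u).mpr (fun V _ => V.2)
        obtain ⟨q, hqK, hqR⟩ := pws_exists_mem_KOplus hdense (hJ _ hW)
        refine ⟨q, subset_closure hqK, ?_⟩
        rw [Set.mem_iInter₂]
        intro V hV
        refine q.toFilter.mem_of_superset hqR ?_
        rintro s ⟨hs1, hs2⟩
        exact ⟨Set.mem_iInter₂.mp hs1 V hV, Set.mem_iInter₂.mp hs2 V hV⟩)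
    obtain ⟨p0, hp0K, hp0R⟩ := hfam
    have hRmem : ∀ V ∈ nhds y, {s : S | D.T s x ∈ V ∧ D.T s y ∈ V} ∈ p0 :=
      fun V hV => Set.mem_iInter.mp hp0R ⟨V, hV⟩
    have hTx : D.Tp p0 x = y := by
      apply Tp_eq_of_le
      rw [Filter.le_def]
      intro V hV
      exact p0.toFilter.mem_of_superset (hRmem V hV) (fun s hs => hs.1)
    have hTy : D.Tp p0 y = y := by
      apply Tp_eq_of_le
      rw [Filter.le_def]
      intro V hV
      exact p0.toFilter.mem_of_superset (hRmem V hV) (fun s hs => hs.2)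
    let Γ : Set (Ultrafilter S) :=
      closure (KOplus S) ∩ ({p | D.Tp p x = y} ∩ {p | D.Tp p y = y})
    have hΓclosed : IsClosed Γ :=
      isClosed_closure.inter ((isClosed_eq (Tp_continuous D x) continuous_const).inter
        (isClosed_eq (Tp_continuous D y) continuous_const))
    have hΓne : Γ.Nonempty := ⟨p0, hp0K, hTx, hTy⟩
    have hΓadd : ∀ p ∈ Γ, ∀ q ∈ Γ, p + q ∈ Γ := by
      intro p hp q hq
      have huadd : p + q = uadd p q := rfl
      refine ⟨?_, ?_, ?_⟩
      · rw [huadd]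
        exact closure_KOplus_add_right hp.1 (closure_KOplus_subset hq.1)
      · show D.Tp (uadd p q) x = y
        rw [Tp_uadd, hq.2.1, hp.2.2]
      · show D.Tp (uadd p q) y = y
        rw [Tp_uadd, hq.2.2, hp.2.2]
    obtain ⟨m, hmΓ, hmm⟩ := exists_idempotent_in_compact_add_subsemigroup
      (fun r => Ultrafilter.continuous_add_left r) Γ hΓne hΓclosed.isCompact hΓadd
    refine ⟨m, hmΓ.1, hmm, ?_⟩
    rw [hAeq]
    exact mem_Tp_nhds D (by rw [hmΓ.2.1]; exact hUy)
end
end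

section
/- Let S be a dense subsemigroup of ((0,∞),+) and A ⊆ S. Then A is a C-set near zero if and only if there exists a dynamical system (X, ⟨T_s⟩_{s∈S}), points x, y ∈ X forming a JIAUR₀ pair, and a neighborhood U of y with A = {s ∈ S : T_s(x) ∈ U}. -/
open Filter Topology Set

noncomputable section

/-!
(⇐) The sets whose complement is not a J-set near zero form a filter `K`, because being a J-set
near zero is partition regular: for finitely many null sequences one forms block sums indexed by
the words of a Hales–Jewett cube, and a monochromatic combinatorial line turns the J-set property
of `A ∪ B` into that of `A` or `B`. The ultrafilters finer than `K` are exactly `J₀(S)`. If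
`(x, y)` is JIAUR₀, the ultrafilters `p ≥ K` with `T_p x = T_p y = y` form a nonempty closed
subsemigroup of `βS`, so by Ellis' theorem it contains an idempotent, and `A ∈ p` because
`T_p x = y ∈ U`.

(⇒) For an idempotent `p ∋ A` take the shift on `{0,1}^(S ∪ {0})`, `x` the indicator of `A` and
`y = T_p x`. Idempotence gives `T_p y = y`, so every joint return set of `(x, y)` to a
neighbourhood of `y` lies in `p`, hence is a J-set near zero.
-/

-- With these instances `uadd p q` is definitionally `p + q`.
attribute [local instance] Ultrafilter.add Ultrafilter.addSemigroup

lemma sum_geometric_two'_le {a : ℝ} (ha : 0 ≤ a) (M : Finset ℕ) :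
    ∑ m ∈ M, a / 2 / 2 ^ m ≤ a :=
  ((summable_geometric_two' a).sum_le_tsum M fun _ _ => by positivity).trans_eq
    (tsum_geometric_two' a)

lemma AddSubsemigroup.sum_mem_of_nonempty {ι M : Type*} [AddCommMonoid M] (S : AddSubsemigroup M)
    {s : Finset ι} (hs : s.Nonempty) {v : ι → M} (hv : ∀ i ∈ s, v i ∈ S) : ∑ i ∈ s, v i ∈ S :=
  Finset.sum_induction_nonempty v (· ∈ S) (fun _ _ => S.add_mem) hs hv

lemma AddSubsemigroup.add_sum_mem {ι M : Type*} [AddCommMonoid M] (S : AddSubsemigroup M)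
    {a : M} (ha : a ∈ S) (s : Finset ι) {v : ι → M} (hv : ∀ i ∈ s, v i ∈ S) :
    a + ∑ i ∈ s, v i ∈ S := by
  rcases s.eq_empty_or_nonempty with rfl | hs
  · simpa using ha
  · exact S.add_mem ha (S.sum_mem_of_nonempty hs hv)

lemma Combinatorics.Line.sum_apply_eq_add {α ι M : Type*} [Fintype ι] [AddCommMonoid M]
    (l : Line α ι) (ψ : ι → α → M) (a b : α) :
    ∑ i, ψ i (l a i) = ∑ i ∈ Finset.univ.filter (l.idxFun · = none), ψ i a +
      ∑ i ∈ Finset.univ.filter (l.idxFun · ≠ none), ψ i (l b i) := by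
  rw [← Finset.sum_filter_add_sum_filter_not Finset.univ (l.idxFun · = none)]
  congr 1
  · exact Finset.sum_congr rfl fun i hi => by rw [l.apply_none a i (Finset.mem_filter.1 hi).2]
  · refine Finset.sum_congr rfl fun i hi => ?_
    obtain ⟨c, hc⟩ := Option.ne_none_iff_exists'.1 (Finset.mem_filter.1 hi).2
    simp [hc]

section JSets

variable {S : AddSubsemigroup ℝ}

lemma exists_mem_Ioo_of_dense (hdense : Ioi (0 : ℝ) ⊆ closure (S : Set ℝ)) {ε : ℝ} (hε : 0 < ε) :
    ∃ s : S, (s : ℝ) ∈ Ioo 0 ε := by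
  obtain ⟨s, hsS, hs⟩ := (closure_inter_open_nonempty_iff isOpen_Ioo).1
    ⟨ε / 2, hdense (half_pos hε), half_pos hε, half_lt_self hε⟩
  exact ⟨⟨s, hsS⟩, hs⟩

def JSetNearZeroAt (S : AddSubsemigroup ℝ) (A : Set S) (F : Finset (ℕ → S)) (δ : ℝ) : Prop :=
  ∃ a : S, (a : ℝ) < δ ∧ ∃ H : Finset ℕ, H.Nonempty ∧
    ∀ f ∈ F, ∃ b ∈ A, (b : ℝ) = (a : ℝ) + ∑ t ∈ H, ((f t : S) : ℝ)

lemma JSetNearZeroAt.mono {A B : Set S} {F F' : Finset (ℕ → S)} {δ δ' : ℝ}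
    (h : JSetNearZeroAt S A F δ) (hAB : A ⊆ B) (hF : F' ⊆ F) (hδ : δ ≤ δ') :
    JSetNearZeroAt S B F' δ' := by
  obtain ⟨a, ha, H, hH, hb⟩ := h
  exact ⟨a, ha.trans_le hδ, H, hH, fun f hf =>
    let ⟨b, hbA, hb⟩ := hb f (hF hf); ⟨b, hAB hbA, hb⟩⟩

lemma JSetNearZero.mono {A B : Set S} (h : JSetNearZero S A) (hAB : A ⊆ B) :
    JSetNearZero S B := fun F hF hnull δ hδ =>
  JSetNearZeroAt.mono (h F hF hnull δ hδ) hAB subset_rfl le_rfl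

lemma JSetNearZero.exists_lt (hdense : Ioi (0 : ℝ) ⊆ closure (S : Set ℝ)) {A : Set S}
    (h : JSetNearZero S A) {ε : ℝ} (hε : 0 < ε) : ∃ s ∈ A, (s : ℝ) < ε := by
  choose f hf using fun n : ℕ =>
    exists_mem_Ioo_of_dense hdense (show 0 < ε / 2 / 2 / 2 ^ n by positivity)
  have hnull : Tendsto (fun n => (f n : ℝ)) atTop (𝓝 0) :=
    squeeze_zero (fun n => (hf n).1.le) (fun n => (hf n).2.le)
      (summable_geometric_two' (ε / 2)).tendsto_atTop_zero
  obtain ⟨a, ha, H, -, hb⟩ := h {f} (Finset.singleton_nonempty f) (by simpa using hnull)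
    (ε / 2) (half_pos hε)
  obtain ⟨b, hbA, hb⟩ := hb f (Finset.mem_singleton_self f)
  have hsum : ∑ t ∈ H, (f t : ℝ) ≤ ε / 2 :=
    (Finset.sum_le_sum fun t _ => (hf t).2.le).trans
      (sum_geometric_two'_le (half_pos hε).le H)
  exact ⟨b, hbA, by linarith⟩

lemma not_jSetNearZero_empty (hdense : Ioi (0 : ℝ) ⊆ closure (S : Set ℝ)) :
    ¬ JSetNearZero S ∅ := fun h =>
  let ⟨_, hs, _⟩ := h.exists_lt hdense one_pos; hs

lemma exists_injective_small_sums {ι : Type} [Finite ι] (F : Finset (ℕ → S))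
    (hnull : ∀ f ∈ F, Tendsto (fun n => ((f n : S) : ℝ)) atTop (𝓝 0)) {δ : ℝ} (hδ : 0 < δ) :
    ∃ idx : ℕ × ι → ℕ, Function.Injective idx ∧
      (∀ f ∈ F, ∀ i, Tendsto (fun t => ((f (idx (t, i)) : S) : ℝ)) atTop (𝓝 0)) ∧
      ∀ (P : Finset (ℕ × ι)) (w : ℕ × ι → ℕ → S), (∀ p ∈ P, w p ∈ F) →
        ∑ p ∈ P, ((w p (idx p) : S) : ℝ) ≤ δ := by
  obtain ⟨σ, hσ, hσF⟩ := extraction_forall_of_eventually fun m =>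
    (Finset.eventually_all F).2 fun f hf =>
      (hnull f hf).eventually_lt_const (show 0 < δ / 2 / 2 ^ m by positivity)
  obtain ⟨e, he⟩ := exists_injective_nat ι
  let code : ℕ × ι → ℕ := fun p => Nat.pair p.1 (e p.2)
  have hcode : Function.Injective code := fun p q h => by
    obtain ⟨h₁, h₂⟩ := Nat.pair_eq_pair.1 h
    exact Prod.ext h₁ (he h₂)
  refine ⟨σ ∘ code, hσ.injective.comp hcode, fun f hf i => ?_, fun P w hw => ?_⟩
  · exact (hnull f hf).comp <| hσ.tendsto_atTop.comp <|
      tendsto_atTop_mono (fun t => Nat.left_le_pair t (e i)) tendsto_id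
  · calc ∑ p ∈ P, ((w p (σ (code p)) : S) : ℝ)
        ≤ ∑ p ∈ P, δ / 2 / 2 ^ code p :=
          Finset.sum_le_sum fun p hp => (hσF (code p) _ (hw p hp)).le
      _ = ∑ m ∈ P.image code, δ / 2 / 2 ^ m :=
          (Finset.sum_image (f := fun m => δ / 2 / 2 ^ m) hcode.injOn).symm
      _ ≤ δ := sum_geometric_two'_le hδ.le _

lemma Combinatorics.Line.sum_sum_apply_eq_add {α ι : Type*} [Fintype ι] (l : Line α ι)
    (v : α → ℕ → ℝ) {idx : ℕ × ι → ℕ} (hidx : Function.Injective idx) (H : Finset ℕ) (a b : α) :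
    ∑ t ∈ H, ∑ i, v (l a i) (idx (t, i)) =
      ∑ p ∈ H ×ˢ Finset.univ.filter (l.idxFun · ≠ none), v (l b p.2) (idx p) +
        ∑ u ∈ (H ×ˢ Finset.univ.filter (l.idxFun · = none)).image idx, v a u := by
  rw [Finset.sum_image hidx.injOn, Finset.sum_product, Finset.sum_product, ← Finset.sum_add_distrib]
  refine Finset.sum_congr rfl fun t _ => ?_
  rw [l.sum_apply_eq_add (fun i c => v c (idx (t, i))) a b, add_comm]

lemma JSetNearZero.exists_word_sums {C : Set S} (h : JSetNearZero S C) (ι : Type) [Fintype ι]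
    [Nonempty ι] {F : Finset (ℕ → S)} (hF : F.Nonempty)
    (hnull : ∀ f ∈ F, Tendsto (fun n => ((f n : S) : ℝ)) atTop (𝓝 0)) {δ : ℝ} (hδ : 0 < δ) :
    ∃ idx : ℕ × ι → ℕ, Function.Injective idx ∧
      (∀ (P : Finset (ℕ × ι)) (w : ℕ × ι → ℕ → S), (∀ p ∈ P, w p ∈ F) →
        ∑ p ∈ P, ((w p (idx p) : S) : ℝ) ≤ δ / 2) ∧
      ∃ a : S, (a : ℝ) < δ / 2 ∧ ∃ H : Finset ℕ, H.Nonempty ∧ ∀ w : ι → F,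
        ∃ b ∈ C, (b : ℝ) = a + ∑ t ∈ H, ∑ i, (((w i : ℕ → S) (idx (t, i)) : S) : ℝ) := by
  classical
  obtain ⟨idx, hidx, hnull', hsmall⟩ := exists_injective_small_sums (ι := ι) F hnull (half_pos hδ)
  have : Nonempty F := hF.to_subtype
  let g : (ι → F) → ℕ → S := fun w t =>
    ⟨∑ i, (((w i : ℕ → S) (idx (t, i)) : S) : ℝ),
      S.sum_mem_of_nonempty Finset.univ_nonempty fun i _ => ((w i : ℕ → S) (idx (t, i))).2⟩
  have hg : ∀ w, Tendsto (fun t => (g w t : ℝ)) atTop (𝓝 0) := fun w => by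
    simpa using tendsto_finsetSum Finset.univ fun i _ => hnull' _ (w i).2 i
  obtain ⟨a, ha, H, hH, hb⟩ := h (Finset.univ.image g) (Finset.univ_nonempty.image g)
    (by simpa using hg) (δ / 2) (half_pos hδ)
  exact ⟨idx, hidx, hsmall, a, ha, H, hH, fun w =>
    hb (g w) (Finset.mem_image_of_mem g (Finset.mem_univ w))⟩

lemma JSetNearZero.jSetNearZeroAt_or_of_union {A B : Set S} (h : JSetNearZero S (A ∪ B))
    {F : Finset (ℕ → S)} (hF : F.Nonempty)
    (hnull : ∀ f ∈ F, Tendsto (fun n => ((f n : S) : ℝ)) atTop (𝓝 0)) {δ : ℝ} (hδ : 0 < δ) :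
    JSetNearZeroAt S A F δ ∨ JSetNearZeroAt S B F δ := by
  classical
  obtain ⟨ι, _, hHJ⟩ := Combinatorics.Line.exists_mono_in_high_dimension F Bool
  have : Nonempty F := hF.to_subtype
  have : Nonempty ι := let ⟨l, _⟩ := hHJ fun _ => true; ⟨l.proper.choose⟩
  obtain ⟨idx, hidx, hsmall, a, ha, H, hH, hb⟩ := h.exists_word_sums ι hF hnull hδ
  choose b hbAB hb using hb
  obtain ⟨l, c, hl⟩ := hHJ fun w => decide (b w ∈ A)
  obtain ⟨f₀⟩ := ‹Nonempty F›
  -- Along `l` the free coordinates carry `f` itself, while the fixed ones add the same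
  -- amount `fixed` for every `f`, which is absorbed into the new base point `a'`.
  let fixed := ∑ p ∈ H ×ˢ Finset.univ.filter (l.idxFun · ≠ none),
    ((((l f₀ p.2 : F) : ℕ → S) (idx p) : S) : ℝ)
  have hfixed : fixed ≤ δ / 2 := hsmall _ (fun p => (l f₀ p.2 : ℕ → S)) fun p _ => (l f₀ p.2).2
  let a' : S := ⟨a + fixed, S.add_sum_mem a.2 _ fun p _ => ((l f₀ p.2 : ℕ → S) (idx p)).2⟩
  let H' := (H ×ˢ Finset.univ.filter (l.idxFun · = none)).image idx
  obtain ⟨i₀, hi₀⟩ := l.proper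
  have hH' : H'.Nonempty := (hH.product ⟨i₀, by simp [hi₀]⟩).image idx
  have hb' : ∀ f : F, (b (l f) : ℝ) = a' + ∑ u ∈ H', (((f : ℕ → S) u : S) : ℝ) := fun f => by
    rw [hb, l.sum_sum_apply_eq_add (fun c u => (((c : ℕ → S) u : S) : ℝ)) hidx H f f₀, add_assoc]
  have ha' : (a' : ℝ) < δ := show (a : ℝ) + fixed < δ by linarith
  cases c
  · exact .inr ⟨a', ha', H', hH', fun f hf =>
      ⟨_, (hbAB _).resolve_left (by simpa using hl ⟨f, hf⟩), hb' ⟨f, hf⟩⟩⟩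
  · exact .inl ⟨a', ha', H', hH', fun f hf => ⟨_, by simpa using hl ⟨f, hf⟩, hb' ⟨f, hf⟩⟩⟩

theorem JSetNearZero.or_of_union {A B : Set S} (h : JSetNearZero S (A ∪ B)) :
    JSetNearZero S A ∨ JSetNearZero S B := by
  classical
  by_contra! hAB
  obtain ⟨hA, hB⟩ := hAB
  simp only [JSetNearZero, not_forall] at hA hB
  obtain ⟨FA, hFA, hnullA, δA, hδA, hA⟩ := hA
  obtain ⟨FB, -, hnullB, δB, hδB, hB⟩ := hB
  have hnull : ∀ f ∈ FA ∪ FB, Tendsto (fun n => ((f n : S) : ℝ)) atTop (𝓝 0) := fun f hf =>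
    (Finset.mem_union.1 hf).elim (hnullA f) (hnullB f)
  rcases h.jSetNearZeroAt_or_of_union (hFA.mono Finset.subset_union_left) hnull
    (lt_min hδA hδB) with h | h
  · exact hA (h.mono subset_rfl Finset.subset_union_left (min_le_left _ _))
  · exact hB (h.mono subset_rfl Finset.subset_union_right (min_le_right _ _))

end JSets

section JFilter

variable {S : AddSubsemigroup ℝ}

def jFilter (S : AddSubsemigroup ℝ) (hdense : Ioi (0 : ℝ) ⊆ closure (S : Set ℝ)) : Filter S :=
  Filter.comk (fun B => ¬ JSetNearZero S B) (not_jSetNearZero_empty hdense)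
    (fun _ ht _ hst hs => ht (hs.mono hst)) (fun _ hs _ ht h => h.or_of_union.elim hs ht)

lemma frequently_jFilter_iff (hdense : Ioi (0 : ℝ) ⊆ closure (S : Set ℝ)) {P : S → Prop} :
    (∃ᶠ s in jFilter S hdense, P s) ↔ JSetNearZero S {s | P s} := by
  show ¬¬JSetNearZero S {s | P s}ᶜᶜ ↔ _
  rw [not_not, compl_compl]

lemma le_jFilter_iff (hdense : Ioi (0 : ℝ) ⊆ closure (S : Set ℝ)) {p : Ultrafilter S} :
    ↑p ≤ jFilter S hdense ↔ p ∈ J0 S := by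
  refine ⟨fun hp => ⟨fun ε hε => hp fun hJ => ?_, fun B hB => ?_⟩, fun hp C hC => ?_⟩
  · obtain ⟨s, hs, hsε⟩ := hJ.exists_lt hdense hε
    exact hs hsε
  · by_contra hJ
    exact Ultrafilter.compl_mem_iff_notMem.1 (hp (by simpa [jFilter] using hJ)) hB
  · by_contra hCp
    exact hC (hp.2 _ (Ultrafilter.compl_mem_iff_notMem.2 hCp))

lemma add_mem_J0 {p q : Ultrafilter S} (hp : p ∈ J0 S) (hq : q ∈ J0 S) : p + q ∈ J0 S := by
  refine ⟨fun ε hε => ?_, fun C hC F hF hnull δ hδ => ?_⟩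
  · refine (Ultrafilter.eventually_add p q _).2 ?_
    filter_upwards [hp.1 _ (half_pos hε)] with a ha
    filter_upwards [hq.1 _ (half_pos hε)] with t ht
    change (a : ℝ) + t < ε
    linarith [show (a : ℝ) < ε / 2 from ha, show (t : ℝ) < ε / 2 from ht]
  · obtain ⟨a, ha, H, hH, hb⟩ :=
      hp.2 _ ((Ultrafilter.eventually_add p q (· ∈ C)).1 hC) F hF hnull (δ / 2) (half_pos hδ)
    have : ∀ᶠ (c : S) in (q : Filter S), (c : ℝ) < δ / 2 ∧
        ∀ f ∈ F, ∃ b ∈ C, (b : ℝ) = ((a + c : S) : ℝ) + ∑ t ∈ H, ((f t : S) : ℝ) := by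
      refine Filter.Eventually.and (hq.1 _ (half_pos hδ))
        ((Finset.eventually_all F).2 fun f hf => ?_)
      obtain ⟨b, hbC, hb⟩ := hb f hf
      filter_upwards [hbC] with c hc
      refine ⟨b + c, hc, ?_⟩
      change (b : ℝ) + c = (a + c) + _
      rw [hb]
      ring
    obtain ⟨c, hc, hcF⟩ := this.exists
    exact ⟨a + c, show (a : ℝ) + c < δ by linarith, H, hH, hcF⟩

end JFilter

lemma Ultrafilter.isClosed_setOf_coe_le {α : Type*} (F : Filter α) :
    IsClosed {r : Ultrafilter α | ↑r ≤ F} := by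
  have : {r : Ultrafilter α | ↑r ≤ F} = ⋂ C ∈ F, {r | C ∈ r} := by ext; simp [Filter.le_def]
  exact this ▸ isClosed_biInter fun C _ => ultrafilter_isClosed_basic C

namespace DynSys

variable {σ : Type}

section Add

variable [Add σ] (D : DynSys σ)

lemma T_T (s t : σ) (z : D.X) : D.T s (D.T t z) = D.T (s + t) z := congrFun (D.comp s t) z

lemma tendsto_Tp (p : Ultrafilter σ) (z : D.X) :
    Tendsto (fun s => D.T s z) p (𝓝 (D.Tp p z)) :=
  Ultrafilter.le_nhds_lim _

lemma Tp_eq_iff {p : Ultrafilter σ} {z y : D.X} :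
    D.Tp p z = y ↔ Tendsto (fun s => D.T s z) p (𝓝 y) :=
  Ultrafilter.lim_eq_iff_le_nhds

lemma Tp_add (p q : Ultrafilter σ) (z : D.X) : D.Tp (p + q) z = D.Tp p (D.Tp q z) := by
  refine D.Tp_eq_iff.2 fun N hN => ?_
  have hp : ∀ᶠ a in (p : Filter σ), ∀ᶠ v in 𝓝 (D.T a (D.Tp q z)), v ∈ N :=
    D.tendsto_Tp p _ (eventually_eventually_nhds.2 hN)
  refine (Ultrafilter.eventually_add p q (fun u => D.T u z ∈ N)).2 (hp.mono fun a ha => ?_)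
  filter_upwards [((D.cont a).tendsto _).comp (D.tendsto_Tp q z) ha] with t ht
  rwa [← T_T]

lemma le_comap_iff_Tp_eq {p : Ultrafilter σ} {x y : D.X} :
    ↑p ≤ comap (fun s => (D.T s x, D.T s y)) (𝓝 (y, y)) ↔ D.Tp p x = y ∧ D.Tp p y = y := by
  rw [← tendsto_iff_comap, nhds_prod_eq, tendsto_prod_iff', D.Tp_eq_iff, D.Tp_eq_iff]

lemma neBot_inf_comap_of_frequently {K : Filter σ} {x y : D.X}
    (hxy : ∀ U ∈ 𝓝 y, ∃ᶠ s in K, D.T s x ∈ U ∧ D.T s y ∈ U) :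
    (K ⊓ comap (fun s => (D.T s x, D.T s y)) (𝓝 (y, y))).NeBot := by
  refine inf_neBot_iff_frequently_right.2 fun {P} hP => ?_
  rw [nhds_prod_eq] at hP
  obtain ⟨U, hU, hUP⟩ := ((𝓝 y).basis_sets.prod_self.comap _).eventually_iff.1 hP
  exact (hxy U hU).mono fun s hs => hUP hs

end Add

variable [AddSemigroup σ]

theorem exists_idempotent_Tp_eq_of_frequently (D : DynSys σ) (K : Filter σ)
    (hK : ∀ p q : Ultrafilter σ, ↑p ≤ K → ↑q ≤ K → ↑(p + q) ≤ K) {x y : D.X}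
    (hxy : ∀ U ∈ 𝓝 y, ∃ᶠ s in K, D.T s x ∈ U ∧ D.T s y ∈ U) :
    ∃ p : Ultrafilter σ, ↑p ≤ K ∧ p + p = p ∧ D.Tp p x = y ∧ D.Tp p y = y := by
  have := D.neBot_inf_comap_of_frequently hxy
  set G := comap (fun s => (D.T s x, D.T s y)) (𝓝 (y, y))
  have hadd : ∀ r : Ultrafilter σ, ↑r ≤ K ⊓ G → ∀ r' : Ultrafilter σ, ↑r' ≤ K ⊓ G →
      ↑(r + r') ≤ K ⊓ G := by
    simp only [le_inf_iff, G, D.le_comap_iff_Tp_eq, D.Tp_add]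
    rintro r ⟨hrK, hrx, hry⟩ r' ⟨hr'K, hr'x, hr'y⟩
    exact ⟨hK r r' hrK hr'K, by rw [hr'x, hry], by rw [hr'y, hry]⟩
  obtain ⟨p, hp, hpp⟩ := exists_idempotent_in_compact_add_subsemigroup
    Ultrafilter.continuous_add_left _ (Ultrafilter.exists_le (K ⊓ G))
    (Ultrafilter.isClosed_setOf_coe_le _).isCompact hadd
  exact ⟨p, (le_inf_iff.1 hp).1, hpp, D.le_comap_iff_Tp_eq.1 (le_inf_iff.1 hp).2⟩

end DynSys

def shiftSystem (σ : Type) [AddSemigroup σ] : DynSys σ where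
  X := WithZero σ → Bool
  T s z c := z (c + s)
  cont _ := continuous_pi fun _ => continuous_apply _
  comp s t := by
    ext z c
    simp [add_assoc]

theorem exists_dynSys_orbit_mem_clopen_iff (σ : Type) [AddSemigroup σ] (A : Set σ) :
    ∃ (D : DynSys σ) (x : D.X) (U : Set D.X), IsClopen U ∧ ∀ s, D.T s x ∈ U ↔ s ∈ A := by
  classical
  refine ⟨shiftSystem σ, fun c => decide (c ∈ ((↑) : σ → WithZero σ) '' A), {z | z 0 = true},
    (isClopen_discrete {true}).preimage (continuous_apply 0), fun s => ?_⟩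
  show decide ((0 : WithZero σ) + s ∈ ((↑) : σ → WithZero σ) '' A) = true ↔ s ∈ A
  simp [WithZero.coe_injective.mem_set_image]

theorem exists_dynSys_Tp_eq_of_idempotent {σ : Type} [AddSemigroup σ] {p : Ultrafilter σ}
    (hp : p + p = p) {A : Set σ} (hA : A ∈ p) :
    ∃ (D : DynSys σ) (x y : D.X), D.Tp p x = y ∧ D.Tp p y = y ∧
      ∃ U ∈ 𝓝 y, A = {s | D.T s x ∈ U} := by
  obtain ⟨D, x, U, hU, hxU⟩ := exists_dynSys_orbit_mem_clopen_iff σ A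
  have hyU : D.Tp p x ∈ U :=
    hU.isClosed.mem_of_tendsto (D.tendsto_Tp p x) (Filter.mem_of_superset hA fun s => (hxU s).2)
  refine ⟨D, x, _, rfl, by rw [← D.Tp_add, hp], U, hU.isOpen.mem_nhds hyU, ?_⟩
  ext s
  exact (hxU s).symm

theorem stmt15_general (S : AddSubsemigroup ℝ)
    (hdense : Set.Ioi (0 : ℝ) ⊆ closure (S : Set ℝ))
    (A : Set S) :
    (∃ p ∈ J0 S, uadd p p = p ∧ A ∈ p) ↔
      ∃ (D : DynSys S) (x y : D.X), JIAUR0 S D x y ∧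
        ∃ U ∈ nhds y, A = {s : S | D.T s x ∈ U} := by
  constructor
  · rintro ⟨p, hpJ, hpp, hA⟩
    obtain ⟨D, x, y, hx, hy, U, hU, rfl⟩ := exists_dynSys_Tp_eq_of_idempotent hpp hA
    exact ⟨D, x, y, fun V hV =>
      hpJ.2 _ (inter_mem (D.Tp_eq_iff.1 hx hV) (D.Tp_eq_iff.1 hy hV)), U, hU, rfl⟩
  · rintro ⟨D, x, y, hxy, U, hU, rfl⟩
    obtain ⟨p, hpK, hpp, hx, -⟩ := D.exists_idempotent_Tp_eq_of_frequently (jFilter S hdense)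
      (fun p q hp hq => (le_jFilter_iff hdense).2 <|
        add_mem_J0 ((le_jFilter_iff hdense).1 hp) ((le_jFilter_iff hdense).1 hq))
      (fun V hV => (frequently_jFilter_iff hdense).2 (hxy V hV))
    exact ⟨p, (le_jFilter_iff hdense).1 hpK, hpp, D.Tp_eq_iff.1 hx hU⟩

theorem stmt15 (S : AddSubsemigroup ℝ)
    (hpos : ∀ x : ℝ, x ∈ S → 0 < x)
    (hdense : Set.Ioi (0 : ℝ) ⊆ closure (S : Set ℝ))
    (A : Set S) :
    (∃ p ∈ J0 S, uadd p p = p ∧ A ∈ p) ↔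
      ∃ (D : DynSys S) (x y : D.X), JIAUR0 S D x y ∧
        ∃ U ∈ nhds y, A = {s : S | D.T s x ∈ U} :=
  stmt15_general S hdense A
end
end

section
/- Let S be a semigroup, K a filter on S such that cl(K) = {p ∈ βS : K ⊆ p} is a compact subsemigroup of βS, and A ⊆ S. Then A is a member of an idempotent in cl(K) if and only if there exists a dynamical system (X, ⟨T_s⟩_{s∈S}), points x, y ∈ X, and a neighborhood U of y such that (x,y) is jointly K-recurrent and A = {s ∈ S : T_s(x) ∈ U}. -/
open Filter Topology

noncomputable section

/-- The extension of the semigroup operation to the space of ultrafilters: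
`A ∈ p · q` iff `{x : x⁻¹A ∈ q} ∈ p`. -/
def umul {α : Type} [Mul α] (p q : Ultrafilter α) : Ultrafilter α :=
  p.bind fun a => q.map (a * ·)

/-- A dynamical system over a (multiplicative) semigroup. -/
structure MulDynSys (σ : Type) [Mul σ] where
  X : Type
  [ts : TopologicalSpace X]
  [cs : CompactSpace X]
  [t2 : T2Space X]
  T : σ → X → X
  cont : ∀ s, Continuous (T s)
  comp : ∀ s t, T s ∘ T t = T (s * t)

attribute [instance] MulDynSys.ts MulDynSys.cs MulDynSys.t2

/-- `cl(K) = {p ∈ βS : K ⊆ p}`. -/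
def clK {S : Type} (K : Filter S) : Set (Ultrafilter S) :=
  {p : Ultrafilter S | (p : Filter S) ≤ K}

attribute [local instance] Ultrafilter.mul Ultrafilter.semigroup

lemma mem_umul {α : Type} [Mul α] {p q : Ultrafilter α} {A : Set α} :
    A ∈ umul p q ↔ {a | {b | a * b ∈ A} ∈ q} ∈ p := Iff.rfl

lemma umul_eq_mul {α : Type} [Semigroup α] (p q : Ultrafilter α) : umul p q = p * q := by
  ext A
  rw [mem_umul]
  exact (Ultrafilter.eventually_mul p q (· ∈ A)).symm

lemma continuous_umap {α β : Type} (f : α → β) : Continuous (Ultrafilter.map f) :=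
  ultrafilterBasis_is_basis.continuous_iff.2 <| Set.forall_mem_range.mpr fun s =>
    ultrafilter_isOpen_basic (f ⁻¹' s)

/-- `A` is a member of an idempotent in `cl(K)` iff there are a dynamical system,
points `x, y` and a neighborhood `U` of `y` such that `(x,y)` is jointly
`K`-recurrent and `A = {s : T_s(x) ∈ U}`. -/
theorem stmt16 (S : Type) [Semigroup S] (K : Filter S) [K.NeBot]
    (hne : (clK K).Nonempty)
    (hcompact : IsCompact (clK K))
    (hsub : ∀ p ∈ clK K, ∀ q ∈ clK K, umul p q ∈ clK K)
    (A : Set S) :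
    (∃ p ∈ clK K, umul p p = p ∧ A ∈ p) ↔
      ∃ (D : MulDynSys S) (x y : D.X),
        (∀ U ∈ nhds y, ({s : S | D.T s x ∈ U ∧ D.T s y ∈ U})ᶜ ∉ K) ∧
        ∃ U ∈ nhds y, A = {s : S | D.T s x ∈ U} := by
  constructor
  · rintro ⟨p, hpK, hpp, hpA⟩
    set ι : S → WithOne S := fun s => (s : WithOne S) with hι
    have hinj : Function.Injective ι := fun a b h => WithOne.coe_inj.mp h
    refine ⟨{ X := Ultrafilter (WithOne S)
              T := fun s q => q.map (ι s * ·)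
              cont := fun s => continuous_umap _
              comp := fun s t => by
                funext q
                show Ultrafilter.map _ (Ultrafilter.map _ q) = _
                rw [Ultrafilter.map_map]
                congr 1
                funext b
                show (s : WithOne S) * ((t : WithOne S) * b) = ((s * t : S) : WithOne S) * b
                rw [WithOne.coe_mul, mul_assoc] },
            pure 1, p.map ι, ?_, ?_⟩
    · -- joint K-recurrence
      intro V hV hc
      obtain ⟨t, ⟨B, rfl⟩, hyB, htV⟩ := ultrafilterBasis_is_basis.mem_nhds_iff.mp hV
      have hB' : ι ⁻¹' B ∈ p := hyB
      have h2 : {a : S | {b | a * b ∈ ι ⁻¹' B} ∈ p} ∈ p := by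
        have : ι ⁻¹' B ∈ umul p p := by rw [hpp]; exact hB'
        exact mem_umul.mp this
      have hW : {s : S | (Ultrafilter.map (ι s * ·) (pure 1) ∈ {u : Ultrafilter (WithOne S) | B ∈ u})
          ∧ (Ultrafilter.map (ι s * ·) (p.map ι) ∈ {u : Ultrafilter (WithOne S) | B ∈ u})} ∈ p := by
        refine mem_of_superset (inter_mem hB' h2) ?_
        rintro s ⟨hs1, hs2⟩
        constructor
        · show B ∈ Ultrafilter.map (ι s * ·) (pure 1)
          rw [Ultrafilter.mem_map]
          show ι s * 1 ∈ B
          rw [mul_one]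
          exact hs1
        · show B ∈ Ultrafilter.map (ι s * ·) (p.map ι)
          rw [Ultrafilter.mem_map, Ultrafilter.mem_map]
          exact hs2
      have hRp : {s : S | Ultrafilter.map (ι s * ·) (pure 1) ∈ V ∧
          Ultrafilter.map (ι s * ·) (p.map ι) ∈ V} ∈ p :=
        mem_of_superset hW fun s hs => ⟨htV hs.1, htV hs.2⟩
      have hcp := hpK hc
      exact Ultrafilter.compl_notMem_iff.mpr hRp hcp
    · refine ⟨{u : Ultrafilter (WithOne S) | ι '' A ∈ u}, ?_, ?_⟩
      · refine (ultrafilter_isOpen_basic _).mem_nhds ?_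
        show ι '' A ∈ p.map ι
        rw [Ultrafilter.mem_map, Set.preimage_image_eq A hinj]
        exact hpA
      · ext s
        simp only [Set.mem_setOf_eq]
        constructor
        · intro hs
          show ι '' A ∈ Ultrafilter.map (ι s * ·) (pure 1)
          rw [Ultrafilter.mem_map]
          show ι s * 1 ∈ ι '' A
          rw [mul_one]
          exact ⟨s, hs, rfl⟩
        · intro hs
          have : ι s * 1 ∈ ι '' A := hs
          rw [mul_one] at this
          obtain ⟨a, ha, hae⟩ := this
          rwa [← hinj hae]
  · rintro ⟨D, x, y, hrec, U, hU, hA⟩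
    set g : S → D.X × D.X := fun s => (D.T s x, D.T s y) with hg
    have key : ∀ V ∈ 𝓝 y, ∀ B ∈ K, ({s | D.T s x ∈ V ∧ D.T s y ∈ V} ∩ B).Nonempty := by
      intro V hV B hB
      by_contra h
      rw [Set.not_nonempty_iff_eq_empty] at h
      refine hrec V hV (mem_of_superset hB ?_)
      intro b hb hbR
      exact Set.eq_empty_iff_forall_notMem.mp h b ⟨hbR, hb⟩
    have hne' : NeBot (K ⊓ comap g (𝓝 (y, y))) := by
      rw [inf_neBot_iff]
      intro B hB W hW
      obtain ⟨W', hW', hsubW⟩ := mem_comap.mp hW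
      rw [nhds_prod_eq] at hW'
      obtain ⟨V₁, hV₁, V₂, hV₂, hVW⟩ := mem_prod_iff.mp hW'
      obtain ⟨s, hs, hsB⟩ := key _ (inter_mem hV₁ hV₂) B hB
      exact ⟨s, hsB, hsubW (hVW ⟨hs.1.1, hs.2.2⟩)⟩
    obtain ⟨r, hr⟩ := Filter.exists_ultrafilter_le (K ⊓ comap g (𝓝 (y, y)))
    have hrM : ∀ V ∈ 𝓝 y, {s | D.T s x ∈ V ∧ D.T s y ∈ V} ∈ r := by
      intro V hV
      have hp : (V ×ˢ V : Set (D.X × D.X)) ∈ 𝓝 (y, y) := by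
        rw [nhds_prod_eq]; exact prod_mem_prod hV hV
      exact (hr.trans inf_le_right) (preimage_mem_comap hp)
    set M : Set (Ultrafilter S) :=
      {q | q ∈ clK K ∧ ∀ V ∈ 𝓝 y, {s | D.T s x ∈ V ∧ D.T s y ∈ V} ∈ q} with hM
    have hrmem : r ∈ M := ⟨hr.trans inf_le_left, hrM⟩
    have hMeq : M = clK K ∩ ⋂ V ∈ 𝓝 y,
        {q : Ultrafilter S | {s | D.T s x ∈ V ∧ D.T s y ∈ V} ∈ q} := by
      ext q
      simp [hM, Set.mem_iInter]
    have hMcomp : IsCompact M := by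
      rw [hMeq]
      exact hcompact.inter_right (isClosed_biInter fun V hV => ultrafilter_isClosed_basic _)
    have hMmul : ∀ a ∈ M, ∀ b ∈ M, a * b ∈ M := by
      intro a ha b hb
      constructor
      · rw [← umul_eq_mul]; exact hsub a ha.1 b hb.1
      · intro V hV
        obtain ⟨V', hV'sub, hV'open, hyV'⟩ := mem_nhds_iff.mp hV
        rw [← umul_eq_mul, mem_umul]
        refine mem_of_superset (ha.2 V' (hV'open.mem_nhds hyV')) ?_
        intro c hc
        have hnb : D.T c ⁻¹' V' ∈ 𝓝 y := ((hV'open.preimage (D.cont c)).mem_nhds hc.2)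
        refine mem_of_superset (hb.2 _ hnb) ?_
        intro d hd
        have e1 : D.T c (D.T d x) = D.T (c * d) x := congrFun (D.comp c d) x
        have e2 : D.T c (D.T d y) = D.T (c * d) y := congrFun (D.comp c d) y
        exact ⟨hV'sub (e1 ▸ hd.1), hV'sub (e2 ▸ hd.2)⟩
    obtain ⟨m, hmM, hmid⟩ := exists_idempotent_in_compact_subsemigroup
      Ultrafilter.continuous_mul_left M ⟨r, hrmem⟩ hMcomp hMmul
    refine ⟨m, hmM.1, by rw [umul_eq_mul]; exact hmid, ?_⟩
    rw [hA]
    exact mem_of_superset (hmM.2 U hU) fun s hs => hs.1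
end
end
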